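/- arXiv:1906.10005 — 3 statements merged into one kernel-verified Lean document; each statement's English description precedes it below -/
import Mathlib

section
/- Flattening of QCTL: any QCTL formula Φ is equivalent to a flat formula whose size is linear in |Φ|, i.e. a formula Q.( Φ_0 ∧ ⋀_{i=1..m} AG( κ_i ↔ θ_i ) ) where Q is a sequence of propositional quantifications, Φ_0 is a Boolean combination of basic CTL formulas, and every θ_i is a basic CTL formula. -/
open Classical

/-- Syntax of QCTL: `φ ::= q | ¬φ | φ∨ψ | EX φ | E φ U ψ | A φ U ψ | ∃p.φ`. -/
inductive QCTL (AP : Type) : Type where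
  | atom : AP → QCTL AP
  | qneg : QCTL AP → QCTL AP
  | qor  : QCTL AP → QCTL AP → QCTL AP
  | qEX  : QCTL AP → QCTL AP
  | qEU  : QCTL AP → QCTL AP → QCTL AP
  | qAU  : QCTL AP → QCTL AP → QCTL AP
  | qexi : AP → QCTL AP → QCTL AP

/-- A Kripke structure over atomic propositions `AP` with (finite) state space `V`:
a serial edge relation and a labelling function. -/
structure Kripke (AP V : Type) where
  E : V → V → Prop
  serial : ∀ v, ∃ w, E v w
  label : V → Set AP

variable {AP V : Type}

/-- `K'` agrees with `K` (same edges) except possibly on the labelling of `p`. -/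
def Kripke.AgreeExcept (K K' : Kripke AP V) (p : AP) : Prop :=
  K'.E = K.E ∧ ∀ v q, q ≠ p → (q ∈ K'.label v ↔ q ∈ K.label v)

/-- Structure semantics of QCTL. -/
def QCTL.sat : QCTL AP → Kripke AP V → V → Prop
  | .atom p, K, x => p ∈ K.label x
  | .qneg φ, K, x => ¬ φ.sat K x
  | .qor φ ψ, K, x => φ.sat K x ∨ ψ.sat K x
  | .qEX φ, K, x => ∃ y, K.E x y ∧ φ.sat K y
  | .qEU φ ψ, K, x => ∃ ρ : ℕ → V, ρ 0 = x ∧ (∀ i, K.E (ρ i) (ρ (i + 1))) ∧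
      ∃ i, ψ.sat K (ρ i) ∧ ∀ j < i, φ.sat K (ρ j)
  | .qAU φ ψ, K, x => ∀ ρ : ℕ → V, ρ 0 = x → (∀ i, K.E (ρ i) (ρ (i + 1))) →
      ∃ i, ψ.sat K (ρ i) ∧ ∀ j < i, φ.sat K (ρ j)
  | .qexi p φ, K, x => ∃ K' : Kripke AP V, K.AgreeExcept K' p ∧ φ.sat K' x

namespace QCTL

def qand (φ ψ : QCTL AP) : QCTL AP := qneg (qor (qneg φ) (qneg ψ))
def qimp (φ ψ : QCTL AP) : QCTL AP := qor (qneg φ) ψ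
def qiff (φ ψ : QCTL AP) : QCTL AP := qand (qimp φ ψ) (qimp ψ φ)
def qtop [Inhabited AP] : QCTL AP := qor (atom default) (qneg (atom default))
def qbot [Inhabited AP] : QCTL AP := qneg qtop
def qAX (φ : QCTL AP) : QCTL AP := qneg (qEX (qneg φ))
def qEF [Inhabited AP] (φ : QCTL AP) : QCTL AP := qEU qtop φ
def qAG [Inhabited AP] (φ : QCTL AP) : QCTL AP := qneg (qEF (qneg φ))
def qall (p : AP) (φ : QCTL AP) : QCTL AP := qneg (qexi p (qneg φ))

/-- All atomic propositions occurring in a formula (free or bound). -/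
def atoms : QCTL AP → Set AP
  | atom p => {p}
  | qneg φ => φ.atoms
  | qor φ ψ => φ.atoms ∪ ψ.atoms
  | qEX φ => φ.atoms
  | qEU φ ψ => φ.atoms ∪ ψ.atoms
  | qAU φ ψ => φ.atoms ∪ ψ.atoms
  | qexi p φ => insert p φ.atoms

/-- Size of a formula. -/
def qsize : QCTL AP → ℕ
  | atom _ => 1
  | qneg φ => φ.qsize + 1
  | qor φ ψ => φ.qsize + ψ.qsize + 1
  | qEX φ => φ.qsize + 1
  | qEU φ ψ => φ.qsize + ψ.qsize + 1
  | qAU φ ψ => φ.qsize + ψ.qsize + 1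
  | qexi _ φ => φ.qsize + 1

end QCTL

/-- Equivalence of two QCTL formulas: same truth value at every state of every
(finite) Kripke structure. -/
def QEquiv (φ ψ : QCTL AP) : Prop :=
  ∀ (V : Type) [Fintype V] (K : Kripke AP V) (x : V), φ.sat K x ↔ ψ.sat K x

/-- `∃p₁.…∃pₙ.φ` for a list of atomic propositions. -/
def exiMany {AP : Type} (l : List AP) (φ : QCTL AP) : QCTL AP := l.foldr QCTL.qexi φ

/-- Conjunction of a list of formulas, with a final base conjunct. -/
def conjList {AP : Type} (l : List (QCTL AP)) (base : QCTL AP) : QCTL AP :=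
  l.foldr QCTL.qand base

/-- Disjunction of a list of formulas, with a final base disjunct. -/
def disjList {AP : Type} (l : List (QCTL AP)) (base : QCTL AP) : QCTL AP :=
  l.foldr QCTL.qor base
/-- Boolean combinations of atomic propositions. -/
inductive BoolAtoms {AP : Type} : QCTL AP → Prop where
  | atom (p : AP) : BoolAtoms (QCTL.atom p)
  | qneg {φ} : BoolAtoms φ → BoolAtoms (QCTL.qneg φ)
  | qor {φ ψ} : BoolAtoms φ → BoolAtoms ψ → BoolAtoms (QCTL.qor φ ψ)

/-- Basic CTL formulas: `EX α`, `E α U β` or `A α U β` with `α`, `β` Boolean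
combinations of atomic propositions. -/
inductive BasicCTL {AP : Type} : QCTL AP → Prop where
  | qEX {α} : BoolAtoms α → BasicCTL (QCTL.qEX α)
  | qEU {α β} : BoolAtoms α → BoolAtoms β → BasicCTL (QCTL.qEU α β)
  | qAU {α β} : BoolAtoms α → BoolAtoms β → BasicCTL (QCTL.qAU α β)

/-- Boolean combinations of basic CTL formulas (and of atomic propositions). -/
inductive BoolCombBasic {AP : Type} : QCTL AP → Prop where
  | basic {φ} : BasicCTL φ → BoolCombBasic φ
  | atom (p : AP) : BoolCombBasic (QCTL.atom p)
  | qneg {φ} : BoolCombBasic φ → BoolCombBasic (QCTL.qneg φ)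
  | qor {φ ψ} : BoolCombBasic φ → BoolCombBasic ψ → BoolCombBasic (QCTL.qor φ ψ)

/-- Quantifier-free QCTL formulas, i.e. CTL formulas. -/
def QCTL.quantFree {AP : Type} : QCTL AP → Prop
  | .atom _ => True
  | .qneg φ => φ.quantFree
  | .qor φ ψ => φ.quantFree ∧ ψ.quantFree
  | .qEX φ => φ.quantFree
  | .qEU φ ψ => φ.quantFree ∧ ψ.quantFree
  | .qAU φ ψ => φ.quantFree ∧ ψ.quantFree
  | .qexi _ _ => False

/-- The body `Φ₀ ∧ ⋀_{i=1..m} AG( κᵢ ↔ θᵢ )` of a flat formula. -/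
def flatBody {AP : Type} [Inhabited AP] (m : ℕ) (κ : Fin m → AP)
    (Φ0 : QCTL AP) (θ : Fin m → QCTL AP) : QCTL AP :=
  conjList
    ((List.finRange m).map fun i => QCTL.qAG (QCTL.qiff (QCTL.atom (κ i)) (θ i)))
    Φ0
/-- A sequence of propositional quantifications applied to a formula
(`true` = existential, `false` = universal). -/
def prefixQ {AP : Type} (Q : List (Bool × AP)) (φ : QCTL AP) : QCTL AP :=
  Q.foldr (fun bp acc => if bp.1 then QCTL.qexi bp.2 acc else QCTL.qall bp.2 acc) φ

/-!
The proof goes through a prenex form `Q. A` of `Φ`, with `A` quantifier-free.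
Quantifiers are pulled out of Boolean connectives after renaming bound atoms apart. Under a
temporal operator, a quantified argument `φ = Q. A` is replaced by a fresh atom `z`, labelled by
the states where `φ` holds, at the cost of the side condition `AG (z → Q. A)`; the latter is
equivalent to `∀ z'. ∃ z''. Q. (G → AG (z' → A))`, where the guard `G` says that `z'` marks a
single reachable state, one carrying `z` (when `z'` marks several states, `z''` separates two of
them and refutes `G`). Each step adds a bounded number of symbols.

The matrix `A` is then flattened: every temporal subformula `M = O (M₁, M₂)` gets a fresh atom `κ`
defined by `AG (κ ↔ O (b₁, b₂))`, where `bᵢ` is the Boolean skeleton of `Mᵢ` over such atoms.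
The atoms `κ` are quantified existentially; a witness labels each `κ` by the states satisfying
its `M`, and conversely the definitions force every `κ` to agree with its `M` on the reachable
states, which is all a CTL formula sees.

Fresh atoms are taken from an injective enumeration of atoms outside `Φ`, split into disjoint
sub-enumerations for the subformulas.
-/

open QCTL Function Set

namespace Kripke

variable (K : Kripke AP V)

def Reach : V → V → Prop := Relation.ReflTransGen K.E

def IsPath (ρ : ℕ → V) : Prop := ∀ i, K.E (ρ i) (ρ (i + 1))

variable {K}

lemma IsPath.reach {ρ : ℕ → V} (hρ : K.IsPath ρ) (i : ℕ) : K.Reach (ρ 0) (ρ i) := by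
  induction i with
  | zero => exact .refl
  | succ i ih => exact ih.tail (hρ i)

lemma Reach.exists_path {x v : V} (h : K.Reach x v) :
    ∃ ρ : ℕ → V, ρ 0 = x ∧ K.IsPath ρ ∧ ∃ n, ρ n = v := by
  induction h using Relation.ReflTransGen.head_induction_on with
  | refl =>
    choose f hf using K.serial
    exact ⟨fun n => f^[n] v, rfl, fun i => by simpa only [iterate_succ_apply'] using hf _, 0, rfl⟩
  | @head a c hac _ ih =>
    obtain ⟨ρ, h0, hρ, n, hn⟩ := ih
    refine ⟨fun | 0 => a | i + 1 => ρ i, rfl, ?_, n + 1, hn⟩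
    rintro (_ | i)
    · simpa [h0] using hac
    · exact hρ i

def AgreeOutside (S : Set AP) (K K' : Kripke AP V) : Prop :=
  K'.E = K.E ∧ ∀ v q, q ∉ S → (q ∈ K'.label v ↔ q ∈ K.label v)

namespace AgreeOutside

variable {S T : Set AP} {K' K'' : Kripke AP V}

@[refl] lemma refl (S : Set AP) (K : Kripke AP V) : AgreeOutside S K K :=
  ⟨rfl, fun _ _ _ => Iff.rfl⟩

lemma symm (h : AgreeOutside S K K') : AgreeOutside S K' K :=
  ⟨h.1.symm, fun v q hq => (h.2 v q hq).symm⟩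

lemma trans (h : AgreeOutside S K K') (h' : AgreeOutside T K' K'') :
    AgreeOutside (S ∪ T) K K'' :=
  ⟨h'.1.trans h.1, fun v q hq => (h'.2 v q fun hT => hq (.inr hT)).trans
    (h.2 v q fun hS => hq (.inl hS))⟩

lemma mono (h : AgreeOutside S K K') (hST : S ⊆ T) : AgreeOutside T K K' :=
  ⟨h.1, fun v q hq => h.2 v q fun hS => hq (hST hS)⟩

lemma reach_eq (h : AgreeOutside S K K') : K'.Reach = K.Reach := by
  rw [Reach, Reach, h.1]

end AgreeOutside

variable (K)

def relabel (S : Set AP) (f : AP → Set V) : Kripke AP V :=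
  ⟨K.E, K.serial, fun v => {q | if q ∈ S then v ∈ f q else q ∈ K.label v}⟩

def override (p : AP) (T : Set V) : Kripke AP V := K.relabel {p} fun _ => T

lemma mem_relabel {S : Set AP} {f : AP → Set V} {v : V} {q : AP} :
    q ∈ (K.relabel S f).label v ↔ if q ∈ S then v ∈ f q else q ∈ K.label v := Iff.rfl

lemma mem_override {p q : AP} {T : Set V} {v : V} :
    q ∈ (K.override p T).label v ↔ if q = p then v ∈ T else q ∈ K.label v := Iff.rfl

lemma agreeOutside_relabel (S : Set AP) (f : AP → Set V) : AgreeOutside S K (K.relabel S f) :=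
  ⟨rfl, fun v q hq => by simp [mem_relabel, hq]⟩

lemma agreeExcept_override (p : AP) (T : Set V) : K.AgreeExcept (K.override p T) p :=
  K.agreeOutside_relabel {p} _

def comap (f : AP → AP) : Kripke AP V := ⟨K.E, K.serial, fun v => f ⁻¹' K.label v⟩

end Kripke

open Kripke

namespace QCTL

variable {φ ψ : QCTL AP} {K : Kripke AP V} {x : V}

@[simp] lemma sat_atom {p : AP} : (atom p).sat K x ↔ p ∈ K.label x := Iff.rfl
@[simp] lemma sat_qneg : (qneg φ).sat K x ↔ ¬ φ.sat K x := Iff.rfl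
@[simp] lemma sat_qor : (qor φ ψ).sat K x ↔ φ.sat K x ∨ ψ.sat K x := Iff.rfl
@[simp] lemma sat_qEX : (qEX φ).sat K x ↔ ∃ y, K.E x y ∧ φ.sat K y := Iff.rfl
@[simp] lemma sat_qexi {p : AP} :
    (qexi p φ).sat K x ↔ ∃ K', K.AgreeExcept K' p ∧ φ.sat K' x := Iff.rfl

lemma sat_qEU : (qEU φ ψ).sat K x ↔
    ∃ ρ, ρ 0 = x ∧ K.IsPath ρ ∧ ∃ i, ψ.sat K (ρ i) ∧ ∀ j < i, φ.sat K (ρ j) := Iff.rfl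

lemma sat_qAU : (qAU φ ψ).sat K x ↔
    ∀ ρ, ρ 0 = x → K.IsPath ρ → ∃ i, ψ.sat K (ρ i) ∧ ∀ j < i, φ.sat K (ρ j) := Iff.rfl

@[simp] lemma sat_qand : (qand φ ψ).sat K x ↔ φ.sat K x ∧ ψ.sat K x := by
  simp [qand]

@[simp] lemma sat_qimp : (qimp φ ψ).sat K x ↔ (φ.sat K x → ψ.sat K x) := by
  simp [qimp, imp_iff_not_or]

@[simp] lemma sat_qiff : (qiff φ ψ).sat K x ↔ (φ.sat K x ↔ ψ.sat K x) := by
  simp [qiff, iff_iff_implies_and_implies]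

@[simp] lemma sat_qall {p : AP} :
    (qall p φ).sat K x ↔ ∀ K', K.AgreeExcept K' p → φ.sat K' x := by
  simp [qall]

variable [Inhabited AP]

@[simp] lemma sat_qtop : (qtop : QCTL AP).sat K x := by
  simpa [qtop] using Classical.em _

@[simp] lemma sat_qEF : (qEF φ).sat K x ↔ ∃ v, K.Reach x v ∧ φ.sat K v := by
  constructor
  · rintro ⟨ρ, rfl, hρ, i, hi, -⟩
    exact ⟨ρ i, IsPath.reach hρ i, hi⟩
  · rintro ⟨v, hv, hφ⟩
    obtain ⟨ρ, h0, hρ, n, rfl⟩ := hv.exists_path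
    exact ⟨ρ, h0, hρ, n, hφ, fun _ _ => sat_qtop⟩

@[simp] lemma sat_qAG : (qAG φ).sat K x ↔ ∀ v, K.Reach x v → φ.sat K v := by
  simp [qAG]

end QCTL

theorem QCTL.sat_congr {S : Set AP} {K K' : Kripke AP V} (h : AgreeOutside S K K') {φ : QCTL AP}
    (hS : Disjoint S φ.atoms) (x : V) : φ.sat K x ↔ φ.sat K' x := by
  induction φ generalizing K K' x with
  | atom p => exact (h.2 x p (disjoint_singleton_right.1 hS)).symm
  | qneg φ ih => exact not_congr (ih h hS x)
  | qor φ ψ ihφ ihψ =>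
    simp only [atoms, disjoint_union_right] at hS
    exact or_congr (ihφ h hS.1 x) (ihψ h hS.2 x)
  | qEX φ ih =>
    simp only [sat_qEX, h.1]
    exact exists_congr fun y => and_congr_right fun _ => ih h hS y
  | qEU φ ψ ihφ ihψ =>
    simp only [atoms, disjoint_union_right] at hS
    simp only [sat_qEU, IsPath, h.1]
    exact exists_congr fun ρ => and_congr_right fun _ => and_congr_right fun _ =>
      exists_congr fun i => and_congr (ihψ h hS.2 _) (forall₂_congr fun j _ => ihφ h hS.1 _)
  | qAU φ ψ ihφ ihψ =>
    simp only [atoms, disjoint_union_right] at hS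
    simp only [sat_qAU, IsPath, h.1]
    exact forall_congr' fun ρ => forall_congr' fun _ => forall_congr' fun _ =>
      exists_congr fun i => and_congr (ihψ h hS.2 _) (forall₂_congr fun j _ => ihφ h hS.1 _)
  | qexi p φ ih =>
    simp only [atoms, disjoint_insert_right] at hS
    -- a witness for one structure is transported to the other by copying its `p`-labelling
    have transfer : ∀ {K K' : Kripke AP V}, AgreeOutside S K K' → ∀ K₁, K.AgreeExcept K₁ p →
        φ.sat K₁ x → ∃ K₁', K'.AgreeExcept K₁' p ∧ φ.sat K₁' x := by
      intro K K' h K₁ h₁ hφ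
      refine ⟨K'.override p {v | p ∈ K₁.label v}, K'.agreeExcept_override _ _, ?_⟩
      refine (ih ?_ hS.2 x).1 hφ
      refine ⟨by rw [h₁.1, ← h.1]; rfl, fun v q hq => ?_⟩
      by_cases hqp : q = p
      · simp [mem_override, hqp]
      · simp only [mem_override, if_neg hqp]
        exact (h.2 v q hq).trans (h₁.2 v q hqp).symm
    exact ⟨fun ⟨K₁, h₁, hφ⟩ => transfer h K₁ h₁ hφ, fun ⟨K₁, h₁, hφ⟩ => transfer h.symm K₁ h₁ hφ⟩

def SemEquiv (φ ψ : QCTL AP) : Prop :=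
  ∀ ⦃V : Type⦄ (K : Kripke AP V) (x : V), φ.sat K x ↔ ψ.sat K x

instance : HasEquiv (QCTL AP) := ⟨SemEquiv⟩

namespace SemEquiv

variable {φ ψ χ : QCTL AP}

@[refl] lemma refl (φ : QCTL AP) : φ ≈ φ := fun _ _ _ => Iff.rfl

lemma symm (h : φ ≈ ψ) : ψ ≈ φ := fun _ K x => (h K x).symm

lemma trans (h : φ ≈ ψ) (h' : ψ ≈ χ) : φ ≈ χ := fun _ K x => (h K x).trans (h' K x)

instance : @Trans (QCTL AP) (QCTL AP) (QCTL AP) (· ≈ ·) (· ≈ ·) (· ≈ ·) := ⟨trans⟩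

lemma qEquiv (h : φ ≈ ψ) : QEquiv φ ψ := fun _ _ K x => h K x

end SemEquiv

namespace QCTL

variable {φ φ' ψ ψ' : QCTL AP}

@[simp] lemma atoms_qand : (qand φ ψ).atoms = φ.atoms ∪ ψ.atoms := rfl

@[simp] lemma atoms_qimp : (qimp φ ψ).atoms = φ.atoms ∪ ψ.atoms := rfl

@[simp] lemma atoms_qEF [Inhabited AP] : (qEF φ).atoms = insert default φ.atoms := by
  ext q
  simp [qEF, qtop, atoms]

@[simp] lemma atoms_qAG [Inhabited AP] : (qAG φ).atoms = insert default φ.atoms := by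
  simp [qAG, atoms]

lemma qneg_congr (h : φ ≈ φ') : qneg φ ≈ qneg φ' := fun _ K x => not_congr (h K x)

lemma qor_congr (h : φ ≈ φ') (h' : ψ ≈ ψ') : qor φ ψ ≈ qor φ' ψ' := fun _ K x =>
  or_congr (h K x) (h' K x)

lemma qand_congr (h : φ ≈ φ') (h' : ψ ≈ ψ') : qand φ ψ ≈ qand φ' ψ' := fun _ K x => by
  simp [h K x, h' K x]

lemma qexi_congr (p : AP) (h : φ ≈ φ') : qexi p φ ≈ qexi p φ' := fun _ K x => by
  simp [h _ x]

lemma qall_congr (p : AP) (h : φ ≈ φ') : qall p φ ≈ qall p φ' := fun _ K x => by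
  simp [h _ x]

lemma qEX_congr (h : φ ≈ φ') : qEX φ ≈ qEX φ' := fun _ K x => by
  simp [h K]

lemma qEU_congr (h : φ ≈ φ') (h' : ψ ≈ ψ') : qEU φ ψ ≈ qEU φ' ψ' := fun _ K x => by
  simp [sat_qEU, h K, h' K]

lemma qAU_congr (h : φ ≈ φ') (h' : ψ ≈ ψ') : qAU φ ψ ≈ qAU φ' ψ' := fun _ K x => by
  simp [sat_qAU, h K, h' K]

lemma qand_comm (φ ψ : QCTL AP) : qand φ ψ ≈ qand ψ φ := fun _ K x => by
  simp [and_comm]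

lemma qor_equiv_qneg_qand (φ ψ : QCTL AP) : qor φ ψ ≈ qneg (qand (qneg φ) (qneg ψ)) :=
  fun _ K x => by simp [or_iff_not_and_not]

lemma qneg_qexi (p : AP) (φ : QCTL AP) : qneg (qexi p φ) ≈ qall p (qneg φ) := fun _ K x => by
  simp

lemma qneg_qall (p : AP) (φ : QCTL AP) : qneg (qall p φ) ≈ qexi p (qneg φ) := fun _ K x => by
  simp

lemma qand_qexi {p : AP} (hp : p ∉ φ.atoms) (ψ : QCTL AP) :
    qand φ (qexi p ψ) ≈ qexi p (qand φ ψ) := fun _ K x => by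
  have hφ : ∀ K', K.AgreeExcept K' p → (φ.sat K x ↔ φ.sat K' x) :=
    fun K' h => sat_congr h (disjoint_singleton_left.2 hp) x
  simp only [sat_qand, sat_qexi]
  exact ⟨fun ⟨h, K', hK', h'⟩ => ⟨K', hK', (hφ K' hK').1 h, h'⟩,
    fun ⟨K', hK', h, h'⟩ => ⟨(hφ K' hK').2 h, K', hK', h'⟩⟩

lemma qand_qall {p : AP} (hp : p ∉ φ.atoms) (ψ : QCTL AP) :
    qand φ (qall p ψ) ≈ qall p (qand φ ψ) := fun _ K x => by
  have hφ : ∀ K', K.AgreeExcept K' p → (φ.sat K x ↔ φ.sat K' x) :=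
    fun K' h => sat_congr h (disjoint_singleton_left.2 hp) x
  simp only [sat_qand, sat_qall]
  exact ⟨fun ⟨h, h'⟩ K' hK' => ⟨(hφ K' hK').1 h, h' K' hK'⟩,
    fun h => ⟨(h K (AgreeOutside.refl _ _)).1, fun K' hK' => (h K' hK').2⟩⟩

def rename (f : AP → AP) : QCTL AP → QCTL AP
  | atom p => atom (f p)
  | qneg φ => qneg (rename f φ)
  | qor φ ψ => qor (rename f φ) (rename f ψ)
  | qEX φ => qEX (rename f φ)
  | qEU φ ψ => qEU (rename f φ) (rename f ψ)
  | qAU φ ψ => qAU (rename f φ) (rename f ψ)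
  | qexi p φ => qexi (f p) (rename f φ)

variable (f : AP → AP) (φ : QCTL AP)

@[simp] lemma qsize_rename : (rename f φ).qsize = φ.qsize := by
  induction φ <;> simp [rename, qsize, *]

@[simp] lemma atoms_rename : (rename f φ).atoms = f '' φ.atoms := by
  induction φ <;> simp [rename, atoms, image_union, image_insert_eq, *]

lemma quantFree_rename (h : φ.quantFree) : (rename f φ).quantFree := by
  induction φ <;> simp_all [rename, quantFree]

theorem sat_rename {f : AP → AP} (hf : Injective f) (φ : QCTL AP) {K : Kripke AP V} {x : V} :
    (rename f φ).sat K x ↔ φ.sat (K.comap f) x := by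
  induction φ generalizing K x with
  | atom p => rfl
  | qneg φ ih => exact not_congr ih
  | qor φ ψ ihφ ihψ => exact or_congr ihφ ihψ
  | qEX φ ih => exact exists_congr fun y => and_congr_right fun _ => ih
  | qEU φ ψ ihφ ihψ =>
    exact exists_congr fun ρ => and_congr_right fun _ => and_congr_right fun _ =>
      exists_congr fun i => and_congr ihψ (forall₂_congr fun j _ => ihφ)
  | qAU φ ψ ihφ ihψ =>
    exact forall_congr' fun ρ => forall_congr' fun _ => forall_congr' fun _ =>
      exists_congr fun i => and_congr ihψ (forall₂_congr fun j _ => ihφ)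
  | qexi p φ ih =>
    simp only [rename, sat_qexi, ih]
    constructor
    · rintro ⟨K₁, h₁, hφ⟩
      exact ⟨K₁.comap f, ⟨h₁.1, fun v q hq => h₁.2 v (f q) (hf.ne hq)⟩, hφ⟩
    · rintro ⟨L, hL, hφ⟩
      set K₁ := K.override (f p) {v | p ∈ L.label v}
      have hL₁ : AgreeOutside ∅ L (K₁.comap f) := by
        refine ⟨hL.1.symm, fun v q _ => ?_⟩
        by_cases hq : q = p
        · simp [K₁, comap, mem_override, hq]
        · simp only [K₁, comap, mem_override, mem_preimage, hf.eq_iff, if_neg hq]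
          exact (hL.2 v q hq).symm
      exact ⟨K₁, K.agreeExcept_override _ _, (sat_congr hL₁ (empty_disjoint _) x).1 hφ⟩

lemma sat_qexi_of_agreeExcept {p : AP} {K K' : Kripke AP V} (h : K.AgreeExcept K' p)
    (φ : QCTL AP) (x : V) : (qexi p φ).sat K x ↔ (qexi p φ).sat K' x := by
  have hK : ∀ {K K' : Kripke AP V}, K.AgreeExcept K' p → ∀ K₁, K.AgreeExcept K₁ p →
      K'.AgreeExcept K₁ p := fun h _ h₁ => by
    have := (AgreeOutside.symm (S := {p}) h).trans (T := {p}) h₁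
    rwa [union_self] at this
  exact ⟨fun ⟨K₁, h₁, hφ⟩ => ⟨K₁, hK h K₁ h₁, hφ⟩,
    fun ⟨K₁, h₁, hφ⟩ => ⟨K₁, hK (AgreeOutside.symm h) K₁ h₁, hφ⟩⟩

lemma sat_qexi_congr {p : AP} {S : Set AP} {K K' : Kripke AP V} (h : AgreeOutside (insert p S) K K')
    {φ : QCTL AP} (hS : Disjoint S (qexi p φ).atoms) (x : V) :
    (qexi p φ).sat K x ↔ (qexi p φ).sat K' x := by
  set K'' := K'.override p {v | p ∈ K.label v}
  have h'' : AgreeOutside S K K'' := by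
    refine ⟨h.1, fun v q hq => ?_⟩
    by_cases hqp : q = p
    · simp [K'', mem_override, hqp]
    · simp only [K'', mem_override, if_neg hqp]
      exact h.2 v q (by simp [hqp, hq])
  exact (sat_congr h'' hS x).trans
    (sat_qexi_of_agreeExcept (AgreeOutside.symm (K'.agreeExcept_override p _)) φ x)

theorem qexi_equiv_rename {p p' : AP} {φ : QCTL AP} (hp' : p' ∉ (qexi p φ).atoms) :
    qexi p φ ≈ qexi p' (rename (Equiv.swap p p') φ) := fun _ K x => by
  have hcomap : AgreeOutside {p, p'} K (K.comap (Equiv.swap p p')) :=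
    ⟨rfl, fun v q hq => by
      simp only [mem_insert_iff, mem_singleton_iff, not_or] at hq
      simp [comap, Equiv.swap_apply_of_ne_of_ne hq.1 hq.2]⟩
  have : qexi p' (rename (Equiv.swap p p') φ) = rename (Equiv.swap p p') (qexi p φ) := by
    simp [rename]
  rw [this, sat_rename (Equiv.injective _)]
  exact sat_qexi_congr hcomap (disjoint_singleton_left.2 hp') x

end QCTL

section Prefix

open QCTL

variable {Q Q₁ Q₂ : List (Bool × AP)} {φ ψ χ : QCTL AP}

@[simp] lemma prefixQ_nil (φ : QCTL AP) : prefixQ [] φ = φ := rfl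

@[simp] lemma prefixQ_cons_true (p : AP) (Q : List (Bool × AP)) (φ : QCTL AP) :
    prefixQ ((true, p) :: Q) φ = qexi p (prefixQ Q φ) := rfl

@[simp] lemma prefixQ_cons_false (p : AP) (Q : List (Bool × AP)) (φ : QCTL AP) :
    prefixQ ((false, p) :: Q) φ = qall p (prefixQ Q φ) := rfl

lemma prefixQ_append (Q₁ Q₂ : List (Bool × AP)) (φ : QCTL AP) :
    prefixQ (Q₁ ++ Q₂) φ = prefixQ Q₁ (prefixQ Q₂ φ) := List.foldr_append

def boundAtoms (Q : List (Bool × AP)) : Set AP := {p | p ∈ Q.map Prod.snd}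

@[simp] lemma boundAtoms_nil : boundAtoms ([] : List (Bool × AP)) = ∅ := by
  simp [boundAtoms]

@[simp] lemma boundAtoms_cons (b : Bool) (p : AP) (Q : List (Bool × AP)) :
    boundAtoms ((b, p) :: Q) = insert p (boundAtoms Q) := by
  ext q
  simp [boundAtoms]

@[simp] lemma boundAtoms_append (Q₁ Q₂ : List (Bool × AP)) :
    boundAtoms (Q₁ ++ Q₂) = boundAtoms Q₁ ∪ boundAtoms Q₂ := by
  ext q
  simp [boundAtoms]

@[simp] lemma atoms_qall (p : AP) (φ : QCTL AP) : (qall p φ).atoms = insert p φ.atoms := rfl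

@[simp] lemma atoms_prefixQ (Q : List (Bool × AP)) (φ : QCTL AP) :
    (prefixQ Q φ).atoms = boundAtoms Q ∪ φ.atoms := by
  induction Q with
  | nil => simp
  | cons bq Q ih =>
    obtain ⟨_ | _, p⟩ := bq <;> simp [atoms, ih, insert_union]

def flipQ (Q : List (Bool × AP)) : List (Bool × AP) := Q.map fun bq => (!bq.1, bq.2)

@[simp] lemma flipQ_cons (b : Bool) (p : AP) (Q : List (Bool × AP)) :
    flipQ ((b, p) :: Q) = (!b, p) :: flipQ Q := rfl

@[simp] lemma flipQ_append (Q₁ Q₂ : List (Bool × AP)) :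
    flipQ (Q₁ ++ Q₂) = flipQ Q₁ ++ flipQ Q₂ := List.map_append

@[simp] lemma flipQ_flipQ (Q : List (Bool × AP)) : flipQ (flipQ Q) = Q := by
  simp [flipQ, Function.comp_def]

@[simp] lemma boundAtoms_flipQ (Q : List (Bool × AP)) : boundAtoms (flipQ Q) = boundAtoms Q := by
  induction Q with
  | nil => rfl
  | cons bq Q ih => obtain ⟨b, p⟩ := bq; simp [ih]

lemma rename_prefixQ {f : AP → AP} (hQ : ∀ p ∈ boundAtoms Q, f p = p) (φ : QCTL AP) :
    rename f (prefixQ Q φ) = prefixQ Q (rename f φ) := by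
  induction Q with
  | nil => rfl
  | cons bq Q ih =>
    obtain ⟨_ | _, p⟩ := bq <;>
    · simp only [boundAtoms_cons, mem_insert_iff, forall_eq_or_imp] at hQ
      simp [rename, qall, hQ.1, ih hQ.2]

theorem sat_prefixQ_congr {K : Kripke AP V} {x y : V}
    (h : ∀ K', AgreeOutside (boundAtoms Q) K K' → (φ.sat K' x ↔ ψ.sat K' y)) :
    (prefixQ Q φ).sat K x ↔ (prefixQ Q ψ).sat K y := by
  induction Q generalizing K with
  | nil => exact h K (.refl _ _)
  | cons bq Q ih =>
    obtain ⟨b, p⟩ := bq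
    have step : ∀ K₁, K.AgreeExcept K₁ p →
        ((prefixQ Q φ).sat K₁ x ↔ (prefixQ Q ψ).sat K₁ y) := fun K₁ h₁ =>
      ih fun K' h' => h K' (by rw [boundAtoms_cons, insert_eq]; exact AgreeOutside.trans h₁ h')
    cases b
    · simpa using forall₂_congr step
    · simpa using exists_congr fun K₁ => and_congr_right (step K₁)

lemma sat_prefixQ_of_forall {K : Kripke AP V} {x : V}
    (h : ∀ K', AgreeOutside (boundAtoms Q) K K' → φ.sat K' x) : (prefixQ Q φ).sat K x := by
  induction Q generalizing K with
  | nil => exact h K (.refl _ _)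
  | cons bq Q ih =>
    obtain ⟨b, p⟩ := bq
    have step : ∀ K₁, K.AgreeExcept K₁ p → (prefixQ Q φ).sat K₁ x := fun K₁ h₁ =>
      ih fun K' h' => h K' (by rw [boundAtoms_cons, insert_eq]; exact AgreeOutside.trans h₁ h')
    cases b
    · simpa using step
    · simpa using ⟨K, AgreeOutside.refl _ _, step K (AgreeOutside.refl _ _)⟩

lemma prefixQ_congr (Q : List (Bool × AP)) (h : φ ≈ ψ) : prefixQ Q φ ≈ prefixQ Q ψ :=
  fun _ _ x => sat_prefixQ_congr fun K' _ => h K' x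

lemma qneg_prefixQ (Q : List (Bool × AP)) (φ : QCTL AP) :
    qneg (prefixQ Q φ) ≈ prefixQ (flipQ Q) (qneg φ) := by
  induction Q with
  | nil => rfl
  | cons bq Q ih =>
    obtain ⟨_ | _, p⟩ := bq
    · exact (qneg_qall p _).trans (qexi_congr p ih)
    · exact (qneg_qexi p _).trans (qall_congr p ih)

lemma qand_prefixQ (hQ : Disjoint (boundAtoms Q) φ.atoms) (ψ : QCTL AP) :
    qand φ (prefixQ Q ψ) ≈ prefixQ Q (qand φ ψ) := by
  induction Q with
  | nil => rfl
  | cons bq Q ih =>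
    obtain ⟨_ | _, p⟩ := bq <;> simp only [boundAtoms_cons, disjoint_insert_left] at hQ
    · exact (qand_qall hQ.1 _).trans (qall_congr p (ih hQ.2))
    · exact (qand_qexi hQ.1 _).trans (qexi_congr p (ih hQ.2))

lemma prefixQ_qand (hQ : Disjoint (boundAtoms Q) ψ.atoms) (φ : QCTL AP) :
    qand (prefixQ Q φ) ψ ≈ prefixQ Q (qand φ ψ) :=
  (qand_comm _ _).trans ((qand_prefixQ hQ _).trans (prefixQ_congr _ (qand_comm _ _)))

lemma prefixQ_qand_prefixQ (h₁ : Disjoint (boundAtoms Q₁) (prefixQ Q₂ ψ).atoms)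
    (h₂ : Disjoint (boundAtoms Q₂) φ.atoms) :
    qand (prefixQ Q₁ φ) (prefixQ Q₂ ψ) ≈ prefixQ (Q₁ ++ Q₂) (qand φ ψ) := calc
  _ ≈ prefixQ Q₁ (qand φ (prefixQ Q₂ ψ)) := prefixQ_qand h₁ _
  _ ≈ prefixQ Q₁ (prefixQ Q₂ (qand φ ψ)) := prefixQ_congr _ (qand_prefixQ h₂ _)
  _ = prefixQ (Q₁ ++ Q₂) (qand φ ψ) := (prefixQ_append _ _ _).symm

lemma prefixQ_qor_prefixQ (h₁ : Disjoint (boundAtoms Q₁) (prefixQ Q₂ ψ).atoms)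
    (h₂ : Disjoint (boundAtoms Q₂) φ.atoms) :
    qor (prefixQ Q₁ φ) (prefixQ Q₂ ψ) ≈ prefixQ (Q₁ ++ Q₂) (qor φ ψ) := calc
  _ ≈ qneg (qand (qneg (prefixQ Q₁ φ)) (qneg (prefixQ Q₂ ψ))) := qor_equiv_qneg_qand _ _
  _ ≈ qneg (qand (prefixQ (flipQ Q₁) (qneg φ)) (prefixQ (flipQ Q₂) (qneg ψ))) :=
    qneg_congr (qand_congr (qneg_prefixQ _ _) (qneg_prefixQ _ _))
  _ ≈ qneg (prefixQ (flipQ Q₁ ++ flipQ Q₂) (qand (qneg φ) (qneg ψ))) :=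
    qneg_congr (prefixQ_qand_prefixQ (by simpa [atoms] using h₁) (by simpa [atoms] using h₂))
  _ ≈ prefixQ (Q₁ ++ Q₂) (qneg (qand (qneg φ) (qneg ψ))) := by
    simpa using qneg_prefixQ (flipQ Q₁ ++ flipQ Q₂) (qand (qneg φ) (qneg ψ))
  _ ≈ prefixQ (Q₁ ++ Q₂) (qor φ ψ) := prefixQ_congr _ (qor_equiv_qneg_qand _ _).symm

end Prefix

section Markers

open QCTL

variable {K : Kripke AP V} {x : V} {a a' b b' : QCTL AP}

lemma sat_qEX_mono (h : ∀ v, K.Reach x v → a.sat K v → a'.sat K v) :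
    (qEX a).sat K x → (qEX a').sat K x :=
  fun ⟨y, hxy, hy⟩ => ⟨y, hxy, h y (.single hxy) hy⟩

lemma sat_qEU_mono (ha : ∀ v, K.Reach x v → a.sat K v → a'.sat K v)
    (hb : ∀ v, K.Reach x v → b.sat K v → b'.sat K v) : (qEU a b).sat K x → (qEU a' b').sat K x := by
  rintro ⟨ρ, rfl, hρ, i, hi, hj⟩
  exact ⟨ρ, rfl, hρ, i, hb _ (IsPath.reach hρ i) hi,
    fun j hji => ha _ (IsPath.reach hρ j) (hj j hji)⟩

lemma sat_qAU_mono (ha : ∀ v, K.Reach x v → a.sat K v → a'.sat K v)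
    (hb : ∀ v, K.Reach x v → b.sat K v → b'.sat K v) : (qAU a b).sat K x → (qAU a' b').sat K x := by
  intro h ρ h0 hρ
  obtain ⟨i, hi, hj⟩ := h ρ h0 hρ
  subst h0
  exact ⟨i, hb _ (IsPath.reach hρ i) hi, fun j hji => ha _ (IsPath.reach hρ j) (hj j hji)⟩

def ReachMono (O : QCTL AP → QCTL AP) : Prop :=
  ∀ ⦃V : Type⦄ (K : Kripke AP V) (x : V) (a b : QCTL AP),
    (∀ v, K.Reach x v → a.sat K v → b.sat K v) → (O a).sat K x → (O b).sat K x

lemma reachMono_qEX : ReachMono (qEX : QCTL AP → QCTL AP) :=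
  fun _ _ _ _ _ h => sat_qEX_mono h

lemma reachMono_qEU_left (ψ : QCTL AP) : ReachMono (qEU · ψ) :=
  fun _ _ _ _ _ h => sat_qEU_mono h fun _ _ => id

lemma reachMono_qEU_right (φ : QCTL AP) : ReachMono (qEU φ) :=
  fun _ _ _ _ _ h => sat_qEU_mono (fun _ _ => id) h

lemma reachMono_qAU_left (ψ : QCTL AP) : ReachMono (qAU · ψ) :=
  fun _ _ _ _ _ h => sat_qAU_mono h fun _ _ => id

lemma reachMono_qAU_right (φ : QCTL AP) : ReachMono (qAU φ) :=
  fun _ _ _ _ _ h => sat_qAU_mono (fun _ _ => id) h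

def Kripke.MarksOnly (K : Kripke AP V) (x : V) (z' : AP) (u : V) : Prop :=
  K.Reach x u ∧ ∀ v, K.Reach x v → (z' ∈ K.label v ↔ v = u)

lemma Kripke.AgreeOutside.marksOnly {S : Set AP} {K' : Kripke AP V} {z' : AP} {u : V}
    (h : AgreeOutside S K K') (hz' : z' ∉ S) (hm : K.MarksOnly x z' u) : K'.MarksOnly x z' u := by
  refine ⟨h.reach_eq ▸ hm.1, fun v hv => ?_⟩
  rw [h.reach_eq] at hv
  rw [h.2 v z' hz']
  exact hm.2 v hv

variable [Inhabited AP]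

/-- The witness labels `z` by the states where `φ` holds. -/
theorem equiv_qexi_marker {O : QCTL AP → QCTL AP} (hO : ReachMono O) {z : AP} {φ : QCTL AP}
    (hz : z ∉ (O φ).atoms) (hzφ : z ∉ φ.atoms) :
    O φ ≈ qexi z (qand (O (atom z)) (qAG (qimp (atom z) φ))) := by
  intro V K x
  simp only [sat_qexi, sat_qand, sat_qAG, sat_qimp, sat_atom]
  constructor
  · intro h
    set K' := K.override z {v | φ.sat K v}
    have hK' := K.agreeExcept_override z {v | φ.sat K v}
    have hφ : ∀ v, φ.sat K' v ↔ φ.sat K v :=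
      fun v => (sat_congr hK' (disjoint_singleton_left.2 hzφ) v).symm
    have hzK' : ∀ v, z ∈ K'.label v ↔ φ.sat K v := by simp [K', mem_override]
    refine ⟨K', hK', hO K' x φ _ (fun v _ h => (hzK' v).2 ((hφ v).1 h)) ?_,
      fun v _ h => (hφ v).2 ((hzK' v).1 h)⟩
    exact (sat_congr hK' (disjoint_singleton_left.2 hz) x).1 h
  · rintro ⟨K', hK', hOz, hAG⟩
    exact (sat_congr hK' (disjoint_singleton_left.2 hz) x).2 (hO K' x (atom z) φ hAG hOz)

/-- For a suitable `z''`, this guard holds iff `z'` marks exactly one reachable state, and that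
state carries `z`. -/
def singleMark (z z' z'' : AP) : QCTL AP :=
  qand (qEF (atom z')) (qand (qAG (qimp (atom z') (atom z)))
    (qneg (qand (qEF (qand (atom z') (atom z''))) (qEF (qand (atom z') (qneg (atom z'')))))))

def markBlock (z z' z'' : AP) (A : QCTL AP) : QCTL AP :=
  qimp (singleMark z z' z'') (qAG (qimp (atom z') A))

lemma atoms_singleMark_subset (z z' z'' : AP) :
    (singleMark z z' z'').atoms ⊆ {default, z, z', z''} := by
  intro q
  simp only [singleMark, atoms_qand, atoms_qEF, atoms_qAG, atoms_qimp, atoms, mem_union,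
    mem_insert_iff, mem_singleton_iff]
  tauto

lemma atoms_markBlock_subset {z z' z'' : AP} {A : QCTL AP} :
    (markBlock z z' z'' A).atoms ⊆ {default, z, z', z''} ∪ A.atoms := by
  simp only [markBlock, atoms_qimp, atoms_qAG, atoms, union_subset_iff, insert_subset_iff,
    singleton_union]
  exact ⟨(atoms_singleMark_subset z z' z'').trans subset_union_left, by simp, by simp,
    subset_union_right⟩

variable {z z' z'' : AP} {u : V}

lemma sat_singleMark (h : K.MarksOnly x z' u) (hz : z ∈ K.label u) :
    (singleMark z z' z'').sat K x := by
  obtain ⟨hu, h⟩ := h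
  simp only [singleMark, sat_qand, sat_qEF, sat_qAG, sat_qimp, sat_atom, sat_qneg]
  refine ⟨⟨u, hu, (h u hu).2 rfl⟩, fun v hv hz' => (h v hv).1 hz' ▸ hz, ?_⟩
  rintro ⟨⟨v, hv, hv', hv''⟩, ⟨w, hw, hw', hw''⟩⟩
  rw [(h v hv).1 hv'] at hv''
  rw [(h w hw).1 hw'] at hw''
  exact hw'' hv''

lemma exists_not_sat_singleMark (hz'' : z'' ≠ z')
    (h : ¬ ∃ u, K.MarksOnly x z' u ∧ z ∈ K.label u) :
    ∃ K', K.AgreeExcept K' z'' ∧ ¬ (singleMark z z' z'').sat K' x := by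
  simp only [singleMark, sat_qand, sat_qEF, sat_qAG, sat_qimp, sat_atom, sat_qneg]
  by_cases hex : ∃ u, K.Reach x u ∧ z' ∈ K.label u
  · obtain ⟨u, hu, hu'⟩ := hex
    by_cases hall : ∀ v, K.Reach x v → z' ∈ K.label v → v = u
    · refine ⟨K, AgreeOutside.refl _ _, fun ⟨_, hz, _⟩ => h ⟨u, ⟨hu, fun v hv => ?_⟩, ?_⟩⟩
      · exact ⟨hall v hv, fun e => e ▸ hu'⟩
      · exact hz u hu hu'
    · push Not at hall
      obtain ⟨w, hw, hw', hwu⟩ := hall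
      refine ⟨K.override z'' {u}, K.agreeExcept_override _ _,
        fun ⟨_, _, hsep⟩ => hsep ⟨?_, ?_⟩⟩
      · exact ⟨u, hu, by simpa [mem_override, hz''.symm] using hu'⟩
      · exact ⟨w, hw, by simpa [mem_override, hz''.symm, hwu] using hw'⟩
  · exact ⟨K, AgreeOutside.refl _ _, fun ⟨h', _⟩ => hex h'⟩

lemma sat_qAG_qimp_of_marksOnly (h : K.MarksOnly x z' u) (A : QCTL AP) :
    (qAG (qimp (atom z') A)).sat K x ↔ A.sat K u := by
  simp only [sat_qAG, sat_qimp, sat_atom]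
  exact ⟨fun hA => hA u h.1 ((h.2 u h.1).2 rfl), fun hA v hv hz' => (h.2 v hv).1 hz' ▸ hA⟩

lemma sat_prefixQ_markBlock_iff {Q : List (Bool × AP)} {A : QCTL AP}
    (hQ : Disjoint (boundAtoms Q) {default, z, z', z''}) (hm : K.MarksOnly x z' u)
    (hz : z ∈ K.label u) :
    (prefixQ Q (markBlock z z' z'' A)).sat K x ↔ (prefixQ Q A).sat K u := by
  refine sat_prefixQ_congr fun K' hK' => ?_
  have hnot : ∀ q ∈ ({z, z'} : Set AP), q ∉ boundAtoms Q := fun q hq hq' =>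
    hQ.ne_of_mem hq' (by simp only [mem_insert_iff, mem_singleton_iff] at hq ⊢; tauto) rfl
  have hm' := AgreeOutside.marksOnly hK' (hnot z' (by simp)) hm
  have hz' : z ∈ K'.label u := (hK'.2 u z (hnot z (by simp))).2 hz
  simp only [markBlock, sat_qimp, sat_singleMark hm' hz', true_imp_iff]
  exact sat_qAG_qimp_of_marksOnly hm' A

/-- The block `∀z'. ∃z''. Q. markBlock` expresses that `Q. A` holds at every reachable state
marked by `z`: the universal `z'` picks such a state, and any other choice of `z'` is defeated
by falsifying the guard, with the help of `z''` when `z'` marks several states. -/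
theorem qAG_qimp_prefixQ_equiv_markBlock {Q : List (Bool × AP)} {A : QCTL AP} (hzz' : z ≠ z')
    (hzz'' : z ≠ z'') (hz'z'' : z' ≠ z'') (hQ : Disjoint (boundAtoms Q) {default, z, z', z''})
    (hA : Disjoint {z', z''} A.atoms) :
    qAG (qimp (atom z) (prefixQ Q A)) ≈
      prefixQ ((false, z') :: (true, z'') :: Q) (markBlock z z' z'' A) := by
  intro V K₀ x
  have hF : ∀ K', AgreeOutside {z', z''} K₀ K' → ∀ v,
      (prefixQ Q A).sat K₀ v ↔ (prefixQ Q A).sat K' v := fun K' h v => by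
    refine sat_congr h ?_ v
    rw [atoms_prefixQ, disjoint_union_right]
    exact ⟨disjoint_of_subset_left (by simp [insert_subset_iff]) hQ.symm, hA⟩
  have hQm : Disjoint (boundAtoms Q) (singleMark z z' z'').atoms :=
    disjoint_of_subset_right (atoms_singleMark_subset z z' z'') hQ
  simp only [sat_qAG, sat_qimp, sat_atom, prefixQ_cons_false, prefixQ_cons_true, sat_qall,
    sat_qexi]
  constructor
  · intro hAG K₁ h₁
    by_cases hgood : ∃ u, K₁.MarksOnly x z' u ∧ z ∈ K₁.label u
    · obtain ⟨u, hm, hz⟩ := hgood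
      refine ⟨K₁, AgreeOutside.refl _ _, (sat_prefixQ_markBlock_iff hQ hm hz).2 ?_⟩
      have h₁' : AgreeOutside {z', z''} K₀ K₁ := AgreeOutside.mono (S := {z'}) h₁ (by simp)
      refine (hF K₁ h₁' u).1 (hAG u ?_ ?_)
      · exact h₁'.reach_eq ▸ hm.1
      · exact (h₁.2 u z hzz').1 hz
    · obtain ⟨K₂, h₂, hK₂⟩ := exists_not_sat_singleMark hz'z''.symm hgood
      refine ⟨K₂, h₂, sat_prefixQ_of_forall fun K' hK' => ?_⟩
      simp only [markBlock, sat_qimp]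
      exact fun hm => absurd ((sat_congr hK' hQm x).2 hm) hK₂
  · intro h v hv hz
    set K₁ := K₀.override z' {v}
    obtain ⟨K₂, h₂, hK₂⟩ := h K₁ (K₀.agreeExcept_override _ _)
    have h₀₂ : AgreeOutside {z', z''} K₀ K₂ := by
      rw [insert_eq]
      exact AgreeOutside.trans (S := {z'}) (T := {z''}) (K₀.agreeExcept_override z' {v}) h₂
    have hm : K₂.MarksOnly x z' v := by
      refine (AgreeOutside.marksOnly (S := {z''}) h₂ hz'z'' ⟨hv, fun w _ => ?_⟩)
      simp [K₁, mem_override]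
    exact (hF K₂ h₀₂ v).2 ((sat_prefixQ_markBlock_iff hQ hm
      ((h₀₂.2 v z (by simp [hzz', hzz''])).2 hz)).1 hK₂)

theorem equiv_prefixQ_markBlock {O : QCTL AP → QCTL AP} (hO : ReachMono O)
    {Q : List (Bool × AP)} {A : QCTL AP} (hzz' : z ≠ z') (hzz'' : z ≠ z'') (hz'z'' : z' ≠ z'')
    (hQ : Disjoint (boundAtoms Q) {default, z, z', z''}) (hA : Disjoint {z, z', z''} A.atoms)
    (hz : z ∉ (O (prefixQ Q A)).atoms)
    (hOz : Disjoint (insert z' (insert z'' (boundAtoms Q))) (O (atom z)).atoms) :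
    O (prefixQ Q A) ≈ prefixQ ((true, z) :: (false, z') :: (true, z'') :: Q)
      (qand (O (atom z)) (markBlock z z' z'' A)) := by
  have hzA : z ∉ (prefixQ Q A).atoms := by
    simp only [atoms_prefixQ, mem_union, not_or]
    exact ⟨fun h => hQ.ne_of_mem h (by simp) rfl, fun h => hA.ne_of_mem (by simp) h rfl⟩
  have hblock := qAG_qimp_prefixQ_equiv_markBlock hzz' hzz'' hz'z'' hQ
    (disjoint_of_subset_left (by simp) hA)
  calc O (prefixQ Q A)
      ≈ qexi z (qand (O (atom z)) (qAG (qimp (atom z) (prefixQ Q A)))) :=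
        equiv_qexi_marker hO hz hzA
    _ ≈ qexi z (qand (O (atom z)) (prefixQ ((false, z') :: (true, z'') :: Q)
          (markBlock z z' z'' A))) := qexi_congr z (qand_congr (.refl _) hblock)
    _ ≈ _ := qexi_congr z (qand_prefixQ (by simpa using hOz) _)

end Markers

section Prenex

open QCTL

variable [Inhabited AP]

def markPrefix (t : ℕ → AP) (Q : List (Bool × AP)) : List (Bool × AP) :=
  (true, t 0) :: (false, t 1) :: (true, t 2) :: Q

def markMatrix (t : ℕ → AP) (C A : QCTL AP) : QCTL AP := qand C (markBlock (t 0) (t 1) (t 2) A)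

/-- Prenex form of `O φ` from a prenex form `r` of `φ`; the markers are `t 0`, `t 1`, `t 2`. -/
def prenexUn (O : QCTL AP → QCTL AP) (t : ℕ → AP) (r : List (Bool × AP) × QCTL AP) :
    List (Bool × AP) × QCTL AP :=
  (markPrefix t r.1, markMatrix t (O (atom (t 0))) r.2)

def prenexBin (O : QCTL AP → QCTL AP → QCTL AP) (t₁ t₂ : ℕ → AP)
    (r₁ r₂ : List (Bool × AP) × QCTL AP) : List (Bool × AP) × QCTL AP :=
  (markPrefix t₁ (r₁.1 ++ (prenexUn (O (atom (t₁ 0))) t₂ r₂).1),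
    markMatrix t₁ (prenexUn (O (atom (t₁ 0))) t₂ r₂).2 r₁.2)

/-- A prenex form `(Q, A)` of a formula; the quantified atoms are drawn from `s`, whose
even/odd-indexed parts and shifts serve as independent supplies for the subformulas. -/
noncomputable def prenex : (ℕ → AP) → QCTL AP → List (Bool × AP) × QCTL AP
  | _, atom p => ([], atom p)
  | s, qneg φ => (flipQ (prenex s φ).1, qneg (prenex s φ).2)
  | s, qor φ ψ => ((prenex (s ∘ (2 * ·)) φ).1 ++ (prenex (s ∘ (2 * · + 1)) ψ).1,
      qor (prenex (s ∘ (2 * ·)) φ).2 (prenex (s ∘ (2 * · + 1)) ψ).2)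
  | s, qEX φ => prenexUn qEX s (prenex (s ∘ (· + 3)) φ)
  | s, qEU φ ψ => prenexBin qEU (s ∘ (2 * ·)) (s ∘ (2 * · + 1))
      (prenex (s ∘ (2 * ·) ∘ (· + 3)) φ) (prenex (s ∘ (2 * · + 1) ∘ (· + 3)) ψ)
  | s, qAU φ ψ => prenexBin qAU (s ∘ (2 * ·)) (s ∘ (2 * · + 1))
      (prenex (s ∘ (2 * ·) ∘ (· + 3)) φ) (prenex (s ∘ (2 * · + 1) ∘ (· + 3)) ψ)
  | s, qexi p φ => ((true, s 0) :: (prenex (s ∘ (· + 1)) φ).1,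
      rename (Equiv.swap p (s 0)) (prenex (s ∘ (· + 1)) φ).2)

lemma atoms_markMatrix_subset {t : ℕ → AP} {C A : QCTL AP} {T : Set AP} (hdef : default ∈ T)
    (ht : ∀ i, t i ∈ T) (hC : C.atoms ⊆ T) (hA : A.atoms ⊆ T) : (markMatrix t C A).atoms ⊆ T := by
  simp only [markMatrix, atoms_qand, union_subset_iff]
  exact ⟨hC, atoms_markBlock_subset.trans (union_subset (by simp [insert_subset_iff, hdef, ht]) hA)⟩

lemma boundAtoms_prenex (s : ℕ → AP) (φ : QCTL AP) : boundAtoms (prenex s φ).1 ⊆ range s := by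
  induction φ generalizing s with
  | atom p => simp [prenex]
  | qneg φ ih => simpa [prenex] using ih s
  | qor φ ψ ihφ ihψ =>
    simp only [prenex, boundAtoms_append, union_subset_iff]
    exact ⟨(ihφ _).trans (range_comp_subset_range _ _), (ihψ _).trans (range_comp_subset_range _ _)⟩
  | qEX φ ih =>
    simp only [prenex, prenexUn, markPrefix, boundAtoms_cons, insert_subset_iff]
    exact ⟨⟨0, rfl⟩, ⟨1, rfl⟩, ⟨2, rfl⟩, (ih _).trans (range_comp_subset_range _ _)⟩
  | qEU φ ψ ihφ ihψ | qAU φ ψ ihφ ihψ =>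
    simp only [prenex, prenexBin, prenexUn, markPrefix, boundAtoms_cons, boundAtoms_append,
      insert_subset_iff, union_subset_iff]
    refine ⟨⟨_, rfl⟩, ⟨_, rfl⟩, ⟨_, rfl⟩, (ihφ _).trans ?_, ⟨_, rfl⟩, ⟨_, rfl⟩, ⟨_, rfl⟩,
      (ihψ _).trans ?_⟩ <;>
    exact (range_comp_subset_range _ _).trans (range_comp_subset_range _ _)
  | qexi p φ ih =>
    simp only [prenex, boundAtoms_cons, insert_subset_iff]
    exact ⟨⟨0, rfl⟩, (ih _).trans (range_comp_subset_range _ _)⟩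

lemma atoms_prenex_subset (s : ℕ → AP) (φ : QCTL AP) :
    (prenex s φ).2.atoms ⊆ insert default φ.atoms ∪ range s := by
  have widen : ∀ {s : ℕ → AP} {X Y : Set AP} {f : ℕ → ℕ}, X ⊆ Y →
      insert default X ∪ range (s ∘ f) ⊆ insert default Y ∪ range s :=
    fun h => union_subset_union (insert_subset_insert h) (range_comp_subset_range _ _)
  induction φ generalizing s with
  | atom p => simp [prenex, atoms]
  | qneg φ ih => simpa [prenex, atoms] using ih s
  | qor φ ψ ihφ ihψ =>
    simp only [prenex, atoms, union_subset_iff]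
    exact ⟨(ihφ _).trans (widen subset_union_left), (ihψ _).trans (widen subset_union_right)⟩
  | qEX φ ih =>
    exact atoms_markMatrix_subset (.inl (mem_insert _ _)) (fun i => .inr ⟨i, rfl⟩)
      (singleton_subset_iff.2 (.inr ⟨0, rfl⟩)) ((ih _).trans (widen subset_rfl))
  | qEU φ ψ ihφ ihψ | qAU φ ψ ihφ ihψ =>
    have hs : ∀ f : ℕ → ℕ, range (s ∘ f) ⊆ insert default (φ.atoms ∪ ψ.atoms) ∪ range s :=
      fun f => (range_comp_subset_range _ _).trans subset_union_right
    refine atoms_markMatrix_subset (.inl (mem_insert _ _)) (fun i => hs _ ⟨i, rfl⟩)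
      (atoms_markMatrix_subset (.inl (mem_insert _ _)) (fun i => hs _ ⟨i, rfl⟩)
        (union_subset (singleton_subset_iff.2 (hs _ ⟨0, rfl⟩))
          (singleton_subset_iff.2 (hs _ ⟨0, rfl⟩))) ((ihψ _).trans (widen subset_union_right)))
      ((ihφ _).trans (widen subset_union_left))
  | qexi p φ ih =>
    simp only [prenex, atoms_rename, image_subset_iff]
    intro q hq
    have := ih (s ∘ (· + 1)) hq
    simp only [mem_preimage, Equiv.swap_apply_def, mem_union, mem_insert_iff, mem_range,
      comp_apply, atoms] at this ⊢
    split_ifs <;> aesop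

@[simp] lemma quantFree_markMatrix {t : ℕ → AP} {C A : QCTL AP} :
    (markMatrix t C A).quantFree ↔ C.quantFree ∧ A.quantFree := by
  simp [markMatrix, markBlock, singleMark, qand, qimp, qAG, qEF, qtop, quantFree]

lemma quantFree_prenex (s : ℕ → AP) (φ : QCTL AP) : (prenex s φ).2.quantFree := by
  induction φ generalizing s with
  | qexi p φ ih => exact quantFree_rename _ _ (ih _)
  | _ => simp_all [prenex, prenexUn, prenexBin, quantFree]

lemma qsize_markMatrix (t : ℕ → AP) (C A : QCTL AP) :
    (markMatrix t C A).qsize = C.qsize + A.qsize + 69 := by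
  simp only [markMatrix, qand, markBlock, qimp, singleMark, qEF, qtop, qAG, qsize]
  omega

lemma prenex_size (s : ℕ → AP) (φ : QCTL AP) :
    (prenex s φ).1.length + (prenex s φ).2.qsize ≤ 150 * φ.qsize := by
  induction φ generalizing s with
  | atom p => simp [prenex, qsize]
  | qneg φ ih => have := ih s; simp only [prenex, flipQ, List.length_map, qsize] at this ⊢; omega
  | qor φ ψ ihφ ihψ =>
    have := ihφ (s ∘ (2 * ·)); have := ihψ (s ∘ (2 * · + 1))
    simp only [prenex, List.length_append, qsize]; omega
  | qEX φ ih =>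
    have := ih (s ∘ (· + 3))
    simp only [prenex, prenexUn, markPrefix, List.length_cons, qsize_markMatrix, qsize]; omega
  | qEU φ ψ ihφ ihψ | qAU φ ψ ihφ ihψ =>
    have := ihφ (s ∘ (2 * ·) ∘ (· + 3)); have := ihψ (s ∘ (2 * · + 1) ∘ (· + 3))
    simp only [prenex, prenexBin, prenexUn, markPrefix, List.length_cons, List.length_append,
      qsize_markMatrix, qsize]
    omega
  | qexi p φ ih =>
    have := ih (s ∘ (· + 1))
    simp only [prenex, List.length_cons, qsize_rename, qsize]; omega

end Prenex

section Supply

structure IsFreshSupply (D : Set AP) (s : ℕ → AP) : Prop where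
  injective : Injective s
  disjoint : Disjoint (range s) D

lemma Function.Injective.mem_range_comp_iff {s : ℕ → AP} (hs : Injective s) {f : ℕ → ℕ}
    {i : ℕ} : s i ∈ range (s ∘ f) ↔ i ∈ range f :=
  ⟨fun ⟨k, hk⟩ => ⟨k, hs hk⟩, fun ⟨k, hk⟩ => ⟨k, by simp [hk]⟩⟩

lemma Function.Injective.disjoint_range_comp {s : ℕ → AP} (hs : Injective s) {f g : ℕ → ℕ}
    (h : Disjoint (range f) (range g)) : Disjoint (range (s ∘ f)) (range (s ∘ g)) := by
  rw [range_comp, range_comp]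
  exact (disjoint_image_iff hs).2 h

namespace IsFreshSupply

variable {D : Set AP} {s : ℕ → AP}

lemma comp (hs : IsFreshSupply D s) {f : ℕ → ℕ} (hf : Injective f) : IsFreshSupply D (s ∘ f) :=
  ⟨hs.injective.comp hf, hs.disjoint.mono_left (range_comp_subset_range _ _)⟩

lemma mono (hs : IsFreshSupply D s) {D' : Set AP} (h : D' ⊆ D) : IsFreshSupply D' s :=
  ⟨hs.injective, hs.disjoint.mono_right h⟩

lemma apply_notMem (hs : IsFreshSupply D s) (i : ℕ) : s i ∉ D :=
  fun h => hs.disjoint.ne_of_mem ⟨i, rfl⟩ h rfl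

lemma disjoint_even_odd (hs : IsFreshSupply D s) :
    Disjoint (range (s ∘ (2 * ·))) (range (s ∘ (2 * · + 1))) :=
  hs.injective.disjoint_range_comp
    (disjoint_left.2 fun _ ⟨a, ha⟩ ⟨b, hb⟩ => by simp only at ha hb; omega)

lemma even (hs : IsFreshSupply D s) : IsFreshSupply (D ∪ range (s ∘ (2 * · + 1))) (s ∘ (2 * ·)) :=
  ⟨hs.injective.comp fun _ _ h => by omega,
    disjoint_union_right.2 ⟨(hs.comp fun _ _ h => by omega).disjoint, hs.disjoint_even_odd⟩⟩

lemma odd (hs : IsFreshSupply D s) : IsFreshSupply (D ∪ range (s ∘ (2 * ·))) (s ∘ (2 * · + 1)) :=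
  ⟨hs.injective.comp fun _ _ h => by omega,
    disjoint_union_right.2 ⟨(hs.comp fun _ _ h => by omega).disjoint, hs.disjoint_even_odd.symm⟩⟩

end IsFreshSupply

end Supply

section PrenexCorrect

open QCTL

/-- The bound atom `p` is renamed to the fresh atom `s 0`, so that it cannot clash with the other
quantifiers of a prefix. -/
theorem qexi_prefixQ_equiv {D : Set AP} {p : AP} {s : ℕ → AP} (hs : IsFreshSupply D s) (hp : p ∈ D)
    {Q : List (Bool × AP)} {A : QCTL AP} (hQ : boundAtoms Q ⊆ range (s ∘ (· + 1)))
    (hA : A.atoms ⊆ D ∪ range (s ∘ (· + 1))) :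
    qexi p (prefixQ Q A) ≈ prefixQ ((true, s 0) :: Q) (rename (Equiv.swap p (s 0)) A) := by
  have hp' : p ∉ range s := fun h => hs.disjoint.ne_of_mem h hp rfl
  have h0 : s 0 ∉ D ∪ range (s ∘ (· + 1)) := fun h => h.elim (hs.apply_notMem 0) fun h => by
    obtain ⟨k, hk⟩ := hs.injective.mem_range_comp_iff.1 h; simp at hk
  have hfix : ∀ q ∈ boundAtoms Q, Equiv.swap p (s 0) q = q := fun q hq =>
    Equiv.swap_apply_of_ne_of_ne (fun h => hp' (h ▸ range_comp_subset_range _ _ (hQ hq)))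
      fun h => h0 (.inr (h ▸ hQ hq))
  refine (qexi_equiv_rename fun h => h0 ?_).trans (by rw [rename_prefixQ hfix]; rfl)
  simp only [atoms, mem_insert_iff, atoms_prefixQ, mem_union] at h
  rcases h with h | h | h
  · exact (hp' (h ▸ ⟨0, rfl⟩)).elim
  · exact .inr (hQ h)
  · exact hA h

variable [Inhabited AP]

theorem equiv_prenexUn {O : QCTL AP → QCTL AP} (hO : ReachMono O) {t : ℕ → AP} {E : Set AP}
    (ht : IsFreshSupply E t) (hdef : default ∈ E) {Q : List (Bool × AP)} {A : QCTL AP}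
    (hQ : boundAtoms Q ⊆ range (t ∘ (· + 3))) (hA : A.atoms ⊆ E ∪ range (t ∘ (· + 3)))
    (hOφ : (O (prefixQ Q A)).atoms ⊆ E ∪ range (t ∘ (· + 3)))
    (hOz : (O (atom (t 0))).atoms ⊆ insert (t 0) E) :
    O (prefixQ Q A) ≈ prefixQ (prenexUn O t (Q, A)).1 (prenexUn O t (Q, A)).2 := by
  have hmark : ∀ i < 3, t i ∉ E ∪ range (t ∘ (· + 3)) := fun i hi h =>
    h.elim (ht.apply_notMem i) fun h' => by
      obtain ⟨k, hk⟩ := ht.injective.mem_range_comp_iff.1 h'; simp only at hk; omega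
  have hQ' : ∀ q ∈ boundAtoms Q, q ∉ insert (t 0) E := fun q hq h => by
    obtain ⟨k, rfl⟩ := hQ hq
    exact h.elim (fun h => hmark 0 (by omega) (.inr ⟨k, h⟩)) (ht.apply_notMem _)
  have hne := ht.injective.ne (a₁ := 0) (a₂ := 1) (by decide)
  refine equiv_prefixQ_markBlock hO hne (ht.injective.ne (by decide))
    (ht.injective.ne (by decide)) ?_ ?_ (fun h => hmark 0 (by omega) (hOφ h)) ?_
  · refine disjoint_left.2 fun q hq h => ?_
    obtain ⟨k, rfl⟩ := hQ hq
    simp only [mem_insert_iff, mem_singleton_iff] at h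
    rcases h with h | h | h | h
    · exact (ht.comp (add_left_injective 3)).disjoint.ne_of_mem ⟨k, rfl⟩ hdef h
    all_goals exact hmark _ (by omega) (.inr ⟨k, h⟩)
  · refine disjoint_left.2 fun q hq h => ?_
    simp only [mem_insert_iff, mem_singleton_iff] at hq
    rcases hq with rfl | rfl | rfl
    all_goals exact hmark _ (by omega) (hA h)
  · refine disjoint_left.2 fun q hq h => ?_
    simp only [mem_insert_iff] at hq
    rcases hq with rfl | rfl | hq
    · exact (hOz h).elim (Ne.symm hne) (ht.apply_notMem 1)
    · exact (hOz h).elim (ht.injective.ne (by decide)) (ht.apply_notMem 2)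
    · exact hQ' q hq (hOz h)

theorem equiv_prenexBin {O : QCTL AP → QCTL AP → QCTL AP} (hO₁ : ∀ ψ, ReachMono (O · ψ))
    (hO₂ : ∀ φ, ReachMono (O φ)) (hOat : ∀ φ ψ, (O φ ψ).atoms = φ.atoms ∪ ψ.atoms)
    {s : ℕ → AP} {D : Set AP} (hs : IsFreshSupply D s) (hdef : default ∈ D)
    {Q₁ Q₂ : List (Bool × AP)} {A₁ A₂ : QCTL AP}
    (hQ₁ : boundAtoms Q₁ ⊆ range (s ∘ (2 * ·) ∘ (· + 3)))
    (hA₁ : A₁.atoms ⊆ D ∪ range (s ∘ (2 * ·) ∘ (· + 3)))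
    (hQ₂ : boundAtoms Q₂ ⊆ range (s ∘ (2 * · + 1) ∘ (· + 3)))
    (hA₂ : A₂.atoms ⊆ D ∪ range (s ∘ (2 * · + 1) ∘ (· + 3))) :
    O (prefixQ Q₁ A₁) (prefixQ Q₂ A₂) ≈
      prefixQ (prenexBin O (s ∘ (2 * ·)) (s ∘ (2 * · + 1)) (Q₁, A₁) (Q₂, A₂)).1
        (prenexBin O (s ∘ (2 * ·)) (s ∘ (2 * · + 1)) (Q₁, A₁) (Q₂, A₂)).2 := by
  set t₁ := s ∘ (2 * ·)
  set t₂ := s ∘ (2 * · + 1)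
  have hr₁ : range (t₁ ∘ (· + 3)) ⊆ range t₁ := range_comp_subset_range _ _
  have hr₂ : range (t₂ ∘ (· + 3)) ⊆ range t₂ := range_comp_subset_range _ _
  have hP₁ : (prefixQ Q₁ A₁).atoms ⊆ D ∪ range (t₁ ∘ (· + 3)) := by
    rw [atoms_prefixQ]; exact union_subset (hQ₁.trans subset_union_right) hA₁
  have hP₂ : (prefixQ Q₂ A₂).atoms ⊆ D ∪ range (t₂ ∘ (· + 3)) := by
    rw [atoms_prefixQ]; exact union_subset (hQ₂.trans subset_union_right) hA₂
  have hP₂' : (prefixQ Q₂ A₂).atoms ⊆ D ∪ range t₂ := hP₂.trans (union_subset_union_right _ hr₂)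
  set r₂ := prenexUn (O (atom (t₁ 0))) t₂ (Q₂, A₂)
  have inner : O (atom (t₁ 0)) (prefixQ Q₂ A₂) ≈ prefixQ r₂.1 r₂.2 := by
    refine equiv_prenexUn (hO₂ _) hs.odd (.inl hdef) hQ₂
      (hA₂.trans (union_subset_union_left _ subset_union_left)) ?_ ?_ <;> rw [hOat]
    · exact union_subset (singleton_subset_iff.2 (.inl (.inr ⟨0, rfl⟩)))
        (hP₂.trans (union_subset_union_left _ subset_union_left))
    · exact union_subset (singleton_subset_iff.2 (mem_insert_of_mem _ (.inr ⟨0, rfl⟩)))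
        (singleton_subset_iff.2 (mem_insert _ _))
  have hdisj : Disjoint (boundAtoms r₂.1) (markBlock (t₁ 0) (t₁ 1) (t₁ 2) A₁).atoms := by
    refine Disjoint.mono ?_ (atoms_markBlock_subset.trans ?_) hs.odd.disjoint
    · simp only [r₂, prenexUn, markPrefix, boundAtoms_cons, insert_subset_iff]
      exact ⟨⟨0, rfl⟩, ⟨1, rfl⟩, ⟨2, rfl⟩, hQ₂.trans hr₂⟩
    · refine union_subset ?_ (hA₁.trans (union_subset_union_right _ hr₁))
      simp only [insert_subset_iff, singleton_subset_iff]
      exact ⟨.inl hdef, .inr ⟨0, rfl⟩, .inr ⟨1, rfl⟩, .inr ⟨2, rfl⟩⟩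
  calc O (prefixQ Q₁ A₁) (prefixQ Q₂ A₂)
      ≈ prefixQ (markPrefix t₁ Q₁)
          (markMatrix t₁ (O (atom (t₁ 0)) (prefixQ Q₂ A₂)) A₁) := by
        refine equiv_prenexUn (hO₁ _) hs.even (.inl hdef) hQ₁
          (hA₁.trans (union_subset_union_left _ subset_union_left)) ?_ ?_ <;> rw [hOat]
        · exact union_subset (hP₁.trans (union_subset_union_left _ subset_union_left))
            (hP₂'.trans subset_union_left)
        · exact union_subset (singleton_subset_iff.2 (mem_insert _ _))
            (hP₂'.trans (subset_insert _ _))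
    _ ≈ prefixQ (markPrefix t₁ Q₁) (markMatrix t₁ (prefixQ r₂.1 r₂.2) A₁) :=
        prefixQ_congr _ (qand_congr inner (.refl _))
    _ ≈ prefixQ (markPrefix t₁ Q₁) (prefixQ r₂.1 (markMatrix t₁ r₂.2 A₁)) :=
        prefixQ_congr _ (prefixQ_qand hdisj _)
    _ = _ := by simp [prenexBin, markPrefix, prefixQ_append, r₂, t₁, t₂]

end PrenexCorrect

section PrenexMain

open QCTL

variable [Inhabited AP] {D : Set AP}

lemma atoms_prenex_subset_of (hdef : default ∈ D) {φ : QCTL AP} (hφ : φ.atoms ⊆ D)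
    (s : ℕ → AP) : (prenex s φ).2.atoms ⊆ D ∪ range s :=
  (atoms_prenex_subset s φ).trans (union_subset_union_left _ (insert_subset hdef hφ))

lemma atoms_prefixQ_prenex_subset (hdef : default ∈ D) {φ : QCTL AP} (hφ : φ.atoms ⊆ D)
    (s : ℕ → AP) : (prefixQ (prenex s φ).1 (prenex s φ).2).atoms ⊆ D ∪ range s := by
  rw [atoms_prefixQ]
  exact union_subset ((boundAtoms_prenex s φ).trans subset_union_right)
    (atoms_prenex_subset_of hdef hφ s)

theorem equiv_prenex (hdef : default ∈ D) (φ : QCTL AP) {s : ℕ → AP} (hs : IsFreshSupply D s)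
    (hφ : φ.atoms ⊆ D) : φ ≈ prefixQ (prenex s φ).1 (prenex s φ).2 := by
  induction φ generalizing s with
  | atom p => rfl
  | qneg φ ih => exact (qneg_congr (ih hs hφ)).trans (qneg_prefixQ _ _)
  | qor φ ψ ihφ ihψ =>
    simp only [atoms, union_subset_iff] at hφ
    refine (qor_congr (ihφ (hs.comp fun _ _ h => by omega) hφ.1)
      (ihψ (hs.comp fun _ _ h => by omega) hφ.2)).trans (prefixQ_qor_prefixQ ?_ ?_)
    · exact hs.even.disjoint.mono (boundAtoms_prenex _ _)
        (atoms_prefixQ_prenex_subset hdef hφ.2 _)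
    · exact hs.odd.disjoint.mono (boundAtoms_prenex _ _) (atoms_prenex_subset_of hdef hφ.1 _)
  | qEX φ ih =>
    replace hφ : φ.atoms ⊆ D := hφ
    exact (qEX_congr (ih (hs.comp (add_left_injective 3)) hφ)).trans
      (equiv_prenexUn reachMono_qEX hs hdef (boundAtoms_prenex _ _)
        (atoms_prenex_subset_of hdef hφ _) (atoms_prefixQ_prenex_subset hdef hφ _)
        (singleton_subset_iff.2 (mem_insert _ _)))
  | qEU φ ψ ihφ ihψ =>
    simp only [atoms, union_subset_iff] at hφ
    exact (qEU_congr (ihφ (hs.comp fun _ _ h => by simp only [comp_apply] at h; omega) hφ.1)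
      (ihψ (hs.comp fun _ _ h => by simp only [comp_apply] at h; omega) hφ.2)).trans
      (equiv_prenexBin reachMono_qEU_left reachMono_qEU_right (fun _ _ => rfl) hs hdef
        (boundAtoms_prenex _ _) (atoms_prenex_subset_of hdef hφ.1 _)
        (boundAtoms_prenex _ _) (atoms_prenex_subset_of hdef hφ.2 _))
  | qAU φ ψ ihφ ihψ =>
    simp only [atoms, union_subset_iff] at hφ
    exact (qAU_congr (ihφ (hs.comp fun _ _ h => by simp only [comp_apply] at h; omega) hφ.1)
      (ihψ (hs.comp fun _ _ h => by simp only [comp_apply] at h; omega) hφ.2)).trans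
      (equiv_prenexBin reachMono_qAU_left reachMono_qAU_right (fun _ _ => rfl) hs hdef
        (boundAtoms_prenex _ _) (atoms_prenex_subset_of hdef hφ.1 _)
        (boundAtoms_prenex _ _) (atoms_prenex_subset_of hdef hφ.2 _))
  | qexi p φ ih =>
    simp only [atoms, insert_subset_iff] at hφ
    exact (qexi_congr p (ih (hs.comp (add_left_injective 1)) hφ.2)).trans
      (qexi_prefixQ_equiv hs hφ.1 (boundAtoms_prenex _ _) (atoms_prenex_subset_of hdef hφ.2 _))

end PrenexMain

section Flatten

open QCTL

/-- A Boolean combination of atoms and a list of definitions `(κ, θ, M)`: the atom `κ` is defined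
by the basic formula `θ` and abbreviates the subformula `M`. Quantified formulas, which never
occur here, get a junk value. -/
def flatten : (ℕ → AP) → QCTL AP → List (AP × QCTL AP × QCTL AP) × QCTL AP
  | _, atom p => ([], atom p)
  | s, qneg φ => ((flatten s φ).1, qneg (flatten s φ).2)
  | s, qor φ ψ => ((flatten (s ∘ (2 * ·)) φ).1 ++ (flatten (s ∘ (2 * · + 1)) ψ).1,
      qor (flatten (s ∘ (2 * ·)) φ).2 (flatten (s ∘ (2 * · + 1)) ψ).2)
  | s, qEX φ => ((flatten (s ∘ (· + 1)) φ).1 ++ [(s 0, qEX (flatten (s ∘ (· + 1)) φ).2, qEX φ)],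
      atom (s 0))
  | s, qEU φ ψ => ((flatten (s ∘ (2 * · + 1)) φ).1 ++ (flatten (s ∘ (2 * · + 2)) ψ).1 ++
      [(s 0, qEU (flatten (s ∘ (2 * · + 1)) φ).2 (flatten (s ∘ (2 * · + 2)) ψ).2, qEU φ ψ)],
      atom (s 0))
  | s, qAU φ ψ => ((flatten (s ∘ (2 * · + 1)) φ).1 ++ (flatten (s ∘ (2 * · + 2)) ψ).1 ++
      [(s 0, qAU (flatten (s ∘ (2 * · + 1)) φ).2 (flatten (s ∘ (2 * · + 2)) ψ).2, qAU φ ψ)],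
      atom (s 0))
  | _, qexi p _ => ([], atom p)

lemma boolAtoms_flatten (s : ℕ → AP) (A : QCTL AP) : BoolAtoms (flatten s A).2 := by
  induction A generalizing s with
  | atom p | qEX | qEU | qAU | qexi p => exact .atom _
  | qneg φ ih => exact .qneg (ih s)
  | qor φ ψ ihφ ihψ => exact .qor (ihφ _) (ihψ _)

lemma basicCTL_flatten (s : ℕ → AP) (A : QCTL AP) : ∀ t ∈ (flatten s A).1, BasicCTL t.2.1 := by
  induction A generalizing s with
  | atom p | qexi p => simp [flatten]
  | qneg φ ih => exact ih s
  | qor φ ψ ihφ ihψ =>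
    simp only [flatten, List.mem_append]
    exact fun t ht => ht.elim (ihφ _ t) (ihψ _ t)
  | qEX φ ih =>
    simp only [flatten, List.mem_append, List.mem_singleton]
    exact fun t ht => ht.elim (ih _ t) fun h => h ▸ .qEX (boolAtoms_flatten _ _)
  | qEU φ ψ ihφ ihψ =>
    simp only [flatten, List.mem_append, List.mem_singleton]
    exact fun t ht => ht.elim (fun ht => ht.elim (ihφ _ t) (ihψ _ t))
      fun h => h ▸ .qEU (boolAtoms_flatten _ _) (boolAtoms_flatten _ _)
  | qAU φ ψ ihφ ihψ =>
    simp only [flatten, List.mem_append, List.mem_singleton]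
    exact fun t ht => ht.elim (fun ht => ht.elim (ihφ _ t) (ihψ _ t))
      fun h => h ▸ .qAU (boolAtoms_flatten _ _) (boolAtoms_flatten _ _)

lemma atoms_flatten_subset (s : ℕ → AP) (A : QCTL AP) :
    ∀ t ∈ (flatten s A).1, t.2.2.atoms ⊆ A.atoms := by
  induction A generalizing s with
  | atom p | qexi p => simp [flatten]
  | qneg φ ih => exact ih s
  | qor φ ψ ihφ ihψ =>
    simp only [flatten, List.mem_append, atoms]
    exact fun t ht => ht.elim (fun h => (ihφ _ t h).trans subset_union_left)
      fun h => (ihψ _ t h).trans subset_union_right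
  | qEX φ ih =>
    simp only [flatten, List.mem_append, List.mem_singleton]
    exact fun t ht => ht.elim (ih _ t) fun h => h ▸ subset_rfl
  | qEU φ ψ ihφ ihψ | qAU φ ψ ihφ ihψ =>
    simp only [flatten, List.mem_append, List.mem_singleton, atoms]
    exact fun t ht => ht.elim (fun ht => ht.elim (fun h => (ihφ _ t h).trans subset_union_left)
      fun h => (ihψ _ t h).trans subset_union_right) fun h => h ▸ subset_rfl

lemma flatten_size (s : ℕ → AP) (A : QCTL AP) :
    ((flatten s A).1.map fun t => t.2.1.qsize + 1).sum + (flatten s A).2.qsize ≤ 3 * A.qsize := by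
  induction A generalizing s with
  | atom p => simp [flatten, qsize]
  | qexi p => simp only [flatten, List.map_nil, List.sum_nil, qsize]; omega
  | qneg φ ih => have := ih s; simp only [flatten, qsize] at this ⊢; omega
  | qor φ ψ ihφ ihψ =>
    have := ihφ (s ∘ (2 * ·)); have := ihψ (s ∘ (2 * · + 1))
    simp only [flatten, qsize, List.map_append, List.sum_append] at *; omega
  | qEX φ ih =>
    have := ih (s ∘ (· + 1))
    simp only [flatten, qsize, List.map_append, List.sum_append, List.map_cons, List.map_nil,
      List.sum_cons, List.sum_nil] at *; omega
  | qEU φ ψ ihφ ihψ | qAU φ ψ ihφ ihψ =>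
    have := ihφ (s ∘ (2 * · + 1)); have := ihψ (s ∘ (2 * · + 2))
    simp only [flatten, qsize, List.map_append, List.sum_append, List.map_cons, List.map_nil,
      List.sum_cons, List.sum_nil] at *; omega

end Flatten

section FlattenCorrect

open QCTL

lemma mem_range_of_mem_flatten (s : ℕ → AP) (A : QCTL AP) :
    ∀ t ∈ (flatten s A).1, t.1 ∈ range s := by
  induction A generalizing s with
  | atom p | qexi p => simp [flatten]
  | qneg φ ih => exact ih s
  | qor φ ψ ihφ ihψ =>
    simp only [flatten, List.mem_append]
    exact fun t ht => ht.elim (fun h => range_comp_subset_range _ _ (ihφ _ t h))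
      fun h => range_comp_subset_range _ _ (ihψ _ t h)
  | qEX φ ih =>
    simp only [flatten, List.mem_append, List.mem_singleton]
    exact fun t ht => ht.elim (fun h => range_comp_subset_range _ _ (ih _ t h))
      fun h => h ▸ ⟨0, rfl⟩
  | qEU φ ψ ihφ ihψ | qAU φ ψ ihφ ihψ =>
    simp only [flatten, List.mem_append, List.mem_singleton]
    exact fun t ht => ht.elim (fun ht => ht.elim
      (fun h => range_comp_subset_range _ _ (ihφ _ t h))
      fun h => range_comp_subset_range _ _ (ihψ _ t h)) fun h => h ▸ ⟨0, rfl⟩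

lemma ne_of_mem_flatten {s : ℕ → AP} (hs : Injective s) {f g : ℕ → ℕ}
    (hfg : Disjoint (range f) (range g)) {φ ψ : QCTL AP} {a b : AP}
    (ha : a ∈ (flatten (s ∘ f) φ).1.map Prod.fst) (hb : b ∈ (flatten (s ∘ g) ψ).1.map Prod.fst) :
    a ≠ b := by
  simp only [List.mem_map] at ha hb
  obtain ⟨t, ht, rfl⟩ := ha
  obtain ⟨t', ht', rfl⟩ := hb
  exact (hs.disjoint_range_comp hfg).ne_of_mem (mem_range_of_mem_flatten _ _ t ht)
    (mem_range_of_mem_flatten _ _ t' ht')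

lemma ne_of_mem_flatten_succ {s : ℕ → AP} (hs : Injective s) {f : ℕ → ℕ} (hf : 0 ∉ range f)
    {φ : QCTL AP} {a : AP} (ha : a ∈ (flatten (s ∘ f) φ).1.map Prod.fst) : a ≠ s 0 := by
  simp only [List.mem_map] at ha
  obtain ⟨t, ht, rfl⟩ := ha
  exact fun h => hf (hs.mem_range_comp_iff.1 (h ▸ mem_range_of_mem_flatten _ _ t ht))

lemma nodup_flatten {s : ℕ → AP} (hs : Injective s) (A : QCTL AP) :
    ((flatten s A).1.map Prod.fst).Nodup := by
  induction A generalizing s with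
  | atom p | qexi p => simp [flatten]
  | qneg φ ih => exact ih hs
  | qor φ ψ ihφ ihψ =>
    simp only [flatten, List.map_append, List.nodup_append]
    exact ⟨ihφ (hs.comp fun a b h => by omega), ihψ (hs.comp fun a b h => by omega),
      fun a ha b hb => ne_of_mem_flatten hs
        (disjoint_left.2 fun _ ⟨a, ha⟩ ⟨b, hb⟩ => by simp only at ha hb; omega) ha hb⟩
  | qEX φ ih =>
    simp only [flatten, List.map_append, List.nodup_append, List.map_cons, List.map_nil,
      List.nodup_cons, List.mem_singleton]
    exact ⟨ih (hs.comp (add_left_injective 1)), ⟨List.not_mem_nil, List.nodup_nil⟩,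
      fun a ha b hb => hb ▸ ne_of_mem_flatten_succ hs (by simp) ha⟩
  | qEU φ ψ ihφ ihψ | qAU φ ψ ihφ ihψ =>
    simp only [flatten, List.map_append, List.nodup_append, List.map_cons, List.map_nil,
      List.nodup_cons, List.mem_singleton, List.mem_append]
    refine ⟨⟨ihφ (hs.comp fun a b h => by omega), ihψ (hs.comp fun a b h => by omega),
      fun a ha b hb => ne_of_mem_flatten hs
        (disjoint_left.2 fun _ ⟨a, ha⟩ ⟨b, hb⟩ => by simp only at ha hb; omega) ha hb⟩,
      ⟨List.not_mem_nil, List.nodup_nil⟩, fun a ha b hb => hb ▸ ?_⟩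
    exact ha.elim (ne_of_mem_flatten_succ hs (by simp))
      (ne_of_mem_flatten_succ hs (by rintro ⟨k, hk⟩; simp at hk))

end FlattenCorrect

def Kripke.EqOnReach (K : Kripke AP V) (x : V) (φ ψ : QCTL AP) : Prop :=
  ∀ v, K.Reach x v → (φ.sat K v ↔ ψ.sat K v)

namespace Kripke.EqOnReach

open QCTL

variable {K : Kripke AP V} {x : V} {φ φ' ψ ψ' χ : QCTL AP}

lemma refl (K : Kripke AP V) (x : V) (φ : QCTL AP) : K.EqOnReach x φ φ := fun _ _ => Iff.rfl

lemma trans (h : K.EqOnReach x φ ψ) (h' : K.EqOnReach x ψ χ) : K.EqOnReach x φ χ :=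
  fun v hv => (h v hv).trans (h' v hv)

lemma symm (h : K.EqOnReach x φ ψ) : K.EqOnReach x ψ φ := fun v hv => (h v hv).symm

lemma of_reach {v : V} (hv : K.Reach x v) (h : K.EqOnReach x φ ψ) : K.EqOnReach v φ ψ :=
  fun u hu => h u (hv.trans hu)

lemma qneg (h : K.EqOnReach x φ φ') : K.EqOnReach x (qneg φ) (qneg φ') :=
  fun v hv => not_congr (h v hv)

lemma qor (h : K.EqOnReach x φ φ') (h' : K.EqOnReach x ψ ψ') :
    K.EqOnReach x (qor φ ψ) (qor φ' ψ') :=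
  fun v hv => or_congr (h v hv) (h' v hv)

lemma qEX (h : K.EqOnReach x φ φ') : K.EqOnReach x (qEX φ) (qEX φ') := fun _ hv =>
  ⟨sat_qEX_mono fun u hu => (h.of_reach hv u hu).1,
    sat_qEX_mono fun u hu => (h.of_reach hv u hu).2⟩

lemma qEU (h : K.EqOnReach x φ φ') (h' : K.EqOnReach x ψ ψ') :
    K.EqOnReach x (qEU φ ψ) (qEU φ' ψ') := fun _ hv =>
  ⟨sat_qEU_mono (fun u hu => (h.of_reach hv u hu).1) fun u hu => (h'.of_reach hv u hu).1,
    sat_qEU_mono (fun u hu => (h.of_reach hv u hu).2) fun u hu => (h'.of_reach hv u hu).2⟩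

lemma qAU (h : K.EqOnReach x φ φ') (h' : K.EqOnReach x ψ ψ') :
    K.EqOnReach x (qAU φ ψ) (qAU φ' ψ') := fun _ hv =>
  ⟨sat_qAU_mono (fun u hu => (h.of_reach hv u hu).1) fun u hu => (h'.of_reach hv u hu).1,
    sat_qAU_mono (fun u hu => (h.of_reach hv u hu).2) fun u hu => (h'.of_reach hv u hu).2⟩

end Kripke.EqOnReach

section FlattenSpec

open QCTL

/-- The disjunctive hypothesis serves both directions of `equiv_flatten`: the definitions `θ` hold
in the quantified body, the abbreviated subformulas `M` in the witness. -/
theorem flatten_spec {s : ℕ → AP} {A : QCTL AP} (hA : A.quantFree) {K : Kripke AP V} {x : V}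
    (h : ∀ t ∈ (flatten s A).1, K.EqOnReach x (atom t.1) t.2.1 ∨ K.EqOnReach x (atom t.1) t.2.2) :
    (∀ t ∈ (flatten s A).1, K.EqOnReach x t.2.1 t.2.2) ∧ K.EqOnReach x (flatten s A).2 A := by
  induction A generalizing s with
  | atom p => exact ⟨by simp [flatten], .refl _ _ _⟩
  | qneg φ ih =>
    obtain ⟨h₁, h₂⟩ := ih hA h
    exact ⟨h₁, h₂.qneg⟩
  | qor φ ψ ihφ ihψ =>
    simp only [flatten, List.mem_append] at h ⊢
    obtain ⟨h₁, h₂⟩ := ihφ hA.1 fun t ht => h t (.inl ht)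
    obtain ⟨h₃, h₄⟩ := ihψ hA.2 fun t ht => h t (.inr ht)
    exact ⟨fun t ht => ht.elim (h₁ t) (h₃ t), h₂.qor h₄⟩
  | qEX φ ih =>
    simp only [flatten, List.mem_append, List.mem_singleton] at h ⊢
    obtain ⟨h₁, h₂⟩ := ih hA fun t ht => h t (.inl ht)
    have hθ := h₂.qEX
    have hκ := (h _ (.inr rfl)).elim (·.trans hθ) id
    exact ⟨fun t ht => ht.elim (h₁ t) (· ▸ hθ), hκ⟩
  | qEU φ ψ ihφ ihψ =>
    simp only [flatten, List.mem_append, List.mem_singleton] at h ⊢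
    obtain ⟨h₁, h₂⟩ := ihφ hA.1 fun t ht => h t (.inl (.inl ht))
    obtain ⟨h₃, h₄⟩ := ihψ hA.2 fun t ht => h t (.inl (.inr ht))
    have hθ := h₂.qEU h₄
    have hκ := (h _ (.inr rfl)).elim (·.trans hθ) id
    exact ⟨fun t ht => ht.elim (·.elim (h₁ t) (h₃ t)) (· ▸ hθ), hκ⟩
  | qAU φ ψ ihφ ihψ =>
    simp only [flatten, List.mem_append, List.mem_singleton] at h ⊢
    obtain ⟨h₁, h₂⟩ := ihφ hA.1 fun t ht => h t (.inl (.inl ht))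
    obtain ⟨h₃, h₄⟩ := ihψ hA.2 fun t ht => h t (.inl (.inr ht))
    have hθ := h₂.qAU h₄
    have hκ := (h _ (.inr rfl)).elim (·.trans hθ) id
    exact ⟨fun t ht => ht.elim (·.elim (h₁ t) (h₃ t)) (· ▸ hθ), hκ⟩
  | qexi p φ => exact hA.elim

end FlattenSpec

section FlatForm

open QCTL

variable {K : Kripke AP V} {x : V}

lemma sat_conjList {l : List (QCTL AP)} {φ : QCTL AP} :
    (conjList l φ).sat K x ↔ φ.sat K x ∧ ∀ ψ ∈ l, ψ.sat K x := by
  induction l with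
  | nil => simp [conjList]
  | cons ψ l ih =>
    simp only [conjList, List.foldr_cons, sat_qand, List.forall_mem_cons] at ih ⊢
    rw [ih]
    tauto

lemma sat_qAG_qiff [Inhabited AP] {φ ψ : QCTL AP} :
    (qAG (qiff φ ψ)).sat K x ↔ K.EqOnReach x φ ψ := by
  simp [EqOnReach]

lemma sat_prefixQ_of_all_exists {Q : List (Bool × AP)} (hQ : ∀ bq ∈ Q, bq.1 = true)
    {φ : QCTL AP} :
    (prefixQ Q φ).sat K x ↔ ∃ K', AgreeOutside (boundAtoms Q) K K' ∧ φ.sat K' x := by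
  induction Q generalizing K with
  | nil => exact ⟨fun h => ⟨K, .refl _ _, h⟩, fun ⟨K', hK', h⟩ => (sat_congr hK' (by simp) x).2 h⟩
  | cons bq Q ih =>
    obtain ⟨b, p⟩ := bq
    obtain rfl : b = true := hQ _ List.mem_cons_self
    simp only [prefixQ_cons_true, sat_qexi, boundAtoms_cons, insert_eq,
      ih fun bq h => hQ bq (List.mem_cons_of_mem _ h)]
    constructor
    · rintro ⟨K₁, h₁, K', h', hφ⟩
      exact ⟨K', AgreeOutside.trans h₁ h', hφ⟩
    · rintro ⟨K', h', hφ⟩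
      refine ⟨K.override p {v | p ∈ K'.label v}, K.agreeExcept_override _ _, K',
        ⟨h'.1, fun v q hq => ?_⟩, hφ⟩
      by_cases hqp : q = p
      · simp [mem_override, hqp]
      · simp only [mem_override, if_neg hqp]
        exact h'.2 v q (by simp [hqp, hq])

def defsPrefix (C : List (AP × QCTL AP × QCTL AP)) : List (Bool × AP) := C.map fun t => (true, t.1)

lemma boundAtoms_defsPrefix (C : List (AP × QCTL AP × QCTL AP)) :
    boundAtoms (defsPrefix C) = {q | ∃ t ∈ C, t.1 = q} := by
  ext q
  simp [boundAtoms, defsPrefix]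

variable [Inhabited AP]

def defsBody (C : List (AP × QCTL AP × QCTL AP)) (Φ₀ : QCTL AP) : QCTL AP :=
  conjList (C.map fun t => qAG (qiff (atom t.1) t.2.1)) Φ₀

/-- The witness labels each defined atom by the subformula it abbreviates. -/
theorem equiv_flatten {s : ℕ → AP} {A : QCTL AP} (hs : IsFreshSupply A.atoms s)
    (hA : A.quantFree) :
    A ≈ prefixQ (defsPrefix (flatten s A).1) (defsBody (flatten s A).1 (flatten s A).2) := by
  intro V K x
  set C := (flatten s A).1
  have hkeys : boundAtoms (defsPrefix C) ⊆ range s := by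
    rw [boundAtoms_defsPrefix]
    rintro _ ⟨t, ht, rfl⟩
    exact mem_range_of_mem_flatten s A t ht
  have hinv : ∀ {K' : Kripke AP V} (φ : QCTL AP), φ.atoms ⊆ A.atoms →
      AgreeOutside (boundAtoms (defsPrefix C)) K K' → ∀ v, (φ.sat K v ↔ φ.sat K' v) :=
    fun φ hφ h v =>
    sat_congr h ((hs.disjoint.mono_left hkeys).mono_right hφ) v
  rw [sat_prefixQ_of_all_exists (by simp [defsPrefix])]
  simp only [defsBody, sat_conjList, List.forall_mem_map, sat_qAG_qiff]
  constructor
  · intro hAx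
    set K' := K.relabel (boundAtoms (defsPrefix C)) fun q => {v | ∀ t ∈ C, t.1 = q → t.2.2.sat K v}
    have hK' := K.agreeOutside_relabel (boundAtoms (defsPrefix C))
      fun q => {v | ∀ t ∈ C, t.1 = q → t.2.2.sat K v}
    have hM : ∀ t ∈ C, K'.EqOnReach x (atom t.1) t.2.2 := by
      intro t ht v _
      have hmem : t.1 ∈ boundAtoms (defsPrefix C) := by
        rw [boundAtoms_defsPrefix]; exact ⟨t, ht, rfl⟩
      rw [sat_atom, mem_relabel, if_pos hmem, ← hinv _ (atoms_flatten_subset s A t ht) hK' v]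
      refine ⟨fun h => h t ht rfl, fun h t' ht' e => ?_⟩
      rwa [List.inj_on_of_nodup_map (nodup_flatten hs.injective A) ht' ht e]
    obtain ⟨hθ, hb⟩ := flatten_spec hA fun t ht => .inr (hM t ht)
    exact ⟨K', hK', (hb x .refl).2 ((hinv A subset_rfl hK' x).1 hAx),
      fun t ht => (hM t ht).trans (hθ t ht).symm⟩
  · rintro ⟨K', hK', hb, hdefs⟩
    obtain ⟨-, hbA⟩ := flatten_spec hA fun t ht => .inl (hdefs t ht)
    exact (hinv A subset_rfl hK' x).2 ((hbA x .refl).1 hb)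

end FlatForm

section Assembly

open QCTL

lemma QCTL.atoms_finite (φ : QCTL AP) : φ.atoms.Finite := by
  induction φ with
  | atom p => exact finite_singleton p
  | qneg φ ih | qEX φ ih => exact ih
  | qor φ ψ ihφ ihψ | qEU φ ψ ihφ ihψ | qAU φ ψ ihφ ihψ => exact ihφ.union ihψ
  | qexi p φ ih => exact ih.insert p

lemma exists_freshSupply [Infinite AP] {D : Set AP} (hD : D.Finite) :
    ∃ s : ℕ → AP, IsFreshSupply D s := by
  let e := hD.infinite_compl.natEmbedding
  refine ⟨fun n => e n, Subtype.val_injective.comp e.injective, disjoint_left.2 ?_⟩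
  rintro _ ⟨n, rfl⟩
  exact (e n).2

lemma BoolAtoms.boolCombBasic {φ : QCTL AP} (h : BoolAtoms φ) : BoolCombBasic φ := by
  induction h with
  | atom p => exact .atom p
  | qneg _ ih => exact .qneg ih
  | qor _ _ ih ih' => exact .qor ih ih'

lemma qsize_prefixQ_le (Q : List (Bool × AP)) (φ : QCTL AP) :
    (prefixQ Q φ).qsize ≤ 3 * Q.length + φ.qsize := by
  induction Q with
  | nil => simp
  | cons bq Q ih =>
    obtain ⟨_ | _, p⟩ := bq <;>
      simp only [prefixQ_cons_false, prefixQ_cons_true, qall, qsize, List.length_cons] <;> omega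

variable [Inhabited AP]

lemma qsize_defsBody_le (C : List (AP × QCTL AP × QCTL AP)) (Φ₀ : QCTL AP) :
    (defsBody C Φ₀).qsize + 3 * C.length ≤
      Φ₀.qsize + 24 * (C.map fun t => t.2.1.qsize + 1).sum := by
  induction C with
  | nil => simp [defsBody, conjList]
  | cons t C ih =>
    simp only [defsBody, conjList, List.map_cons, List.foldr_cons, List.length_cons,
      List.sum_cons] at ih ⊢
    simp only [qand, qAG, qEF, qiff, qimp, qtop, qsize] at ih ⊢
    omega

lemma qsize_prefixQ_defs_le (Q : List (Bool × AP)) (C : List (AP × QCTL AP × QCTL AP))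
    (Φ₀ : QCTL AP) : (prefixQ Q (prefixQ (defsPrefix C) (defsBody C Φ₀))).qsize ≤
      3 * Q.length + Φ₀.qsize + 24 * (C.map fun t => t.2.1.qsize + 1).sum := by
  have := qsize_prefixQ_le Q (prefixQ (defsPrefix C) (defsBody C Φ₀))
  have := qsize_prefixQ_le (defsPrefix C) (defsBody C Φ₀)
  have := qsize_defsBody_le C Φ₀
  simp only [defsPrefix, List.length_map] at *
  omega

lemma flatBody_eq (C : List (AP × QCTL AP × QCTL AP)) (Φ₀ : QCTL AP) :
    flatBody C.length (fun i => (C.get i).1) Φ₀ (fun i => (C.get i).2.1) = defsBody C Φ₀ := by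
  rw [flatBody, defsBody]
  conv_rhs => rw [← List.map_get_finRange C, List.map_map]
  rfl

end Assembly

/-- Flattening of QCTL: any QCTL formula `Φ` is equivalent to a flat formula
`Q.( Φ₀ ∧ ⋀ᵢ AG(κᵢ ↔ θᵢ) )` — with `Q` a sequence of propositional quantifications,
`Φ₀` a Boolean combination of basic CTL formulas and every `θᵢ` a basic CTL formula —
whose size is linear in `|Φ|`. -/
theorem flatten_qctl {AP : Type} [Inhabited AP] [Infinite AP] :
    ∃ C : ℕ, ∀ Φ : QCTL AP,
      ∃ (Q : List (Bool × AP)) (m : ℕ) (κ : Fin m → AP)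
        (Φ0 : QCTL AP) (θ : Fin m → QCTL AP),
        BoolCombBasic Φ0 ∧ (∀ i, BasicCTL (θ i)) ∧
        QEquiv Φ (prefixQ Q (flatBody m κ Φ0 θ)) ∧
        (prefixQ Q (flatBody m κ Φ0 θ)).qsize ≤ C * Φ.qsize := by
  refine ⟨72 * 150, fun Φ => ?_⟩
  obtain ⟨s, hs⟩ := exists_freshSupply (Φ.atoms_finite.insert default)
  set P := prenex (s ∘ (2 * ·)) Φ
  set F := flatten (s ∘ (2 * · + 1)) P.2
  have hP : Φ ≈ prefixQ P.1 P.2 :=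
    equiv_prenex (mem_insert _ _) Φ (hs.comp fun _ _ h => by omega) (subset_insert _ _)
  have hF : P.2 ≈ prefixQ (defsPrefix F.1) (defsBody F.1 F.2) :=
    equiv_flatten (hs.odd.mono (atoms_prenex_subset_of (mem_insert _ _) (subset_insert _ _) _))
      (quantFree_prenex _ _)
  refine ⟨P.1 ++ defsPrefix F.1, F.1.length, fun i => (F.1.get i).1, F.2, fun i => (F.1.get i).2.1,
    (boolAtoms_flatten _ _).boolCombBasic, fun i => basicCTL_flatten _ _ _ (List.get_mem _ _),
    ?_, ?_⟩ <;> rw [flatBody_eq, prefixQ_append]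
  · exact (hP.trans (prefixQ_congr _ hF)).qEquiv
  · calc _ ≤ 3 * P.1.length + F.2.qsize + 24 * (F.1.map fun t => t.2.1.qsize + 1).sum :=
          qsize_prefixQ_defs_le _ _ _
      _ ≤ 3 * P.1.length + 72 * P.2.qsize := by linarith [flatten_size (s ∘ (2 * · + 1)) P.2]
      _ ≤ 72 * 150 * Φ.qsize := by linarith [prenex_size (s ∘ (2 * ·)) Φ]
end

section
/- Correctness and size of the flat fixed-point reduction (method FPF): given a QCTL formula Φ, a Kripke structure K = (V,E,ℓ) and a state x, the QBF formula FPC(Flat(Φ))-hat^x obtained by applying the basic translation rules and the AG-rule is valid if and only if K,x ⊨ Φ; moreover its size is in O(|V|·(|V|+|E|)·|Φ|). -/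
open Classical

variable {AP V : Type}

/-- Quantified Boolean formulas over variables in `W`. -/
inductive QBF (W : Type) : Type where
  | tru : QBF W
  | fls : QBF W
  | var : W → QBF W
  | bneg : QBF W → QBF W
  | bor : QBF W → QBF W → QBF W
  | band : QBF W → QBF W → QBF W
  | bexi : W → QBF W → QBF W
  | ball : W → QBF W → QBF W

namespace QBF
variable {W : Type}

def bimp (α β : QBF W) : QBF W := bor (bneg α) β

/-- Semantics of QBF over a valuation of the (free) variables. -/
def bsat : QBF W → (W → Prop) → Prop
  | tru, _ => True
  | fls, _ => False
  | var w, v => v w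
  | bneg α, v => ¬ α.bsat v
  | bor α β, v => α.bsat v ∨ β.bsat v
  | band α β, v => α.bsat v ∧ β.bsat v
  | bexi w α, v => ∃ b : Prop, α.bsat (fun w' => if w' = w then b else v w')
  | ball w α, v => ∀ b : Prop, α.bsat (fun w' => if w' = w then b else v w')

/-- Validity of a (closed) QBF formula. -/
def valid (α : QBF W) : Prop := ∀ v : W → Prop, α.bsat v

/-- Size of a QBF formula. -/
def bsize : QBF W → ℕ
  | tru => 1
  | fls => 1
  | var _ => 1
  | bneg α => α.bsize + 1
  | bor α β => α.bsize + β.bsize + 1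
  | band α β => α.bsize + β.bsize + 1
  | bexi _ α => α.bsize + 1
  | ball _ α => α.bsize + 1

/-- Finite disjunction `⋁_{y ∈ l} f y`. -/
def bigOr {γ : Type} (l : List γ) (f : γ → QBF W) : QBF W := (l.map f).foldr bor fls

/-- Finite conjunction `⋀_{y ∈ l} f y`. -/
def bigAnd {γ : Type} (l : List γ) (f : γ → QBF W) : QBF W := (l.map f).foldr band tru

end QBF

/-- The list of `E`-successors of a state. -/
noncomputable def Kripke.succList {AP V : Type} [Fintype V] (K : Kripke AP V) (x : V) :
    List V :=
  (Finset.univ.filter fun y => K.E x y).toList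

/-- The list of states reachable from `x` (along `E*`). -/
noncomputable def Kripke.reachList {AP V : Type} [Fintype V] (K : Kripke AP V) (x : V) :
    List V :=
  (Finset.univ.filter fun y => Relation.ReflTransGen K.E x y).toList

/-- The set of quantified atomic propositions of a formula. -/
def QCTL.quantAtoms {AP : Type} : QCTL AP → Set AP
  | .atom _ => ∅
  | .qneg φ => φ.quantAtoms
  | .qor φ ψ => φ.quantAtoms ∪ ψ.quantAtoms
  | .qEX φ => φ.quantAtoms
  | .qEU φ ψ => φ.quantAtoms ∪ ψ.quantAtoms
  | .qAU φ ψ => φ.quantAtoms ∪ ψ.quantAtoms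
  | .qexi p φ => insert p φ.quantAtoms

/-- The set of subformulas of a formula. -/
def QCTL.subforms {AP : Type} : QCTL AP → Set (QCTL AP)
  | .atom p => {QCTL.atom p}
  | .qneg φ => insert (QCTL.qneg φ) φ.subforms
  | .qor φ ψ => insert (QCTL.qor φ ψ) (φ.subforms ∪ ψ.subforms)
  | .qEX φ => insert (QCTL.qEX φ) φ.subforms
  | .qEU φ ψ => insert (QCTL.qEU φ ψ) (φ.subforms ∪ ψ.subforms)
  | .qAU φ ψ => insert (QCTL.qAU φ ψ) (φ.subforms ∪ ψ.subforms)
  | .qexi p φ => insert (QCTL.qexi p φ) φ.subforms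

/-- Semantics of QCTL within an environment `ε` (a partial map from quantified
propositions to sets of states): a proposition in the domain of `ε` is read from `ε`,
any other proposition is read from the labelling of the structure, and the
propositional quantifier extends `ε`. -/
def QCTL.satE {AP V : Type} (K : Kripke AP V) :
    QCTL AP → (AP → Option (Set V)) → V → Prop
  | .atom p, ε, x => match ε p with
      | some S => x ∈ S
      | none => p ∈ K.label x
  | .qneg φ, ε, x => ¬ φ.satE K ε x
  | .qor φ ψ, ε, x => φ.satE K ε x ∨ ψ.satE K ε x
  | .qEX φ, ε, x => ∃ y, K.E x y ∧ φ.satE K ε y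
  | .qEU φ ψ, ε, x => ∃ ρ : ℕ → V, ρ 0 = x ∧ (∀ i, K.E (ρ i) (ρ (i + 1))) ∧
      ∃ i, ψ.satE K ε (ρ i) ∧ ∀ j < i, φ.satE K ε (ρ j)
  | .qAU φ ψ, ε, x => ∀ ρ : ℕ → V, ρ 0 = x → (∀ i, K.E (ρ i) (ρ (i + 1))) →
      ∃ i, ψ.satE K ε (ρ i) ∧ ∀ j < i, φ.satE K ε (ρ j)
  | .qexi p φ, ε, x =>
      ∃ S : Set V, φ.satE K (fun q => if q = p then some S else ε q) x

/-- The domain of an environment. -/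
def envDom {AP V : Type} (ε : AP → Option (Set V)) : Set AP := {p | ε p ≠ none}

/-- The Boolean valuation `v_ε` associated with an environment `ε`:
`v_ε(p^x) = ⊤` iff `x ∈ ε(p)`. -/
def envVal {AP V : Type} (ε : AP → Option (Set V)) : AP × V → Prop :=
  fun w => ∃ S, ε w.1 = some S ∧ w.2 ∈ S
/-- Formulas built from atomic propositions, Boolean operators, propositional
quantifiers and the modalities `EX` and `AG` (the target fragment of the fixed-point
transformation `FPC`). -/
inductive AGF (AP : Type) : Type where
  | atom : AP → AGF AP
  | aneg : AGF AP → AGF AP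
  | aor  : AGF AP → AGF AP → AGF AP
  | aEX  : AGF AP → AGF AP
  | aAG  : AGF AP → AGF AP
  | aexi : AP → AGF AP → AGF AP

namespace AGF
variable {AP : Type}
def aand (φ ψ : AGF AP) : AGF AP := aneg (aor (aneg φ) (aneg ψ))
def aimp (φ ψ : AGF AP) : AGF AP := aor (aneg φ) ψ
def aiff (φ ψ : AGF AP) : AGF AP := aand (aimp φ ψ) (aimp ψ φ)
def aAX (φ : AGF AP) : AGF AP := aneg (aEX (aneg φ))
def aall (p : AP) (φ : AGF AP) : AGF AP := aneg (aexi p (aneg φ))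

/-- An upper bound on the atomic propositions occurring in a formula over `AP = ℕ`
(used to generate fresh propositions). -/
def maxAtom : AGF ℕ → ℕ
  | atom p => p
  | aneg φ => φ.maxAtom
  | aor φ ψ => max φ.maxAtom ψ.maxAtom
  | aEX φ => φ.maxAtom
  | aAG φ => φ.maxAtom
  | aexi p φ => max p φ.maxAtom
end AGF

/-- The fixed-point transformation `FPC`: every `E φ U ψ` is replaced by
`∀z.( AG( z ↔ (ψ ∨ (φ ∧ EX z)) ) → z )` and every `A φ U ψ` by
`∀z.( AG( z ↔ (ψ ∨ (φ ∧ AX z)) ) → z )`, with `z` fresh each time. -/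
def FPC : QCTL ℕ → AGF ℕ
  | .atom p => AGF.atom p
  | .qneg φ => AGF.aneg (FPC φ)
  | .qor φ ψ => AGF.aor (FPC φ) (FPC ψ)
  | .qEX φ => AGF.aEX (FPC φ)
  | .qEU φ ψ =>
      let φ' := FPC φ
      let ψ' := FPC ψ
      let z := max φ'.maxAtom ψ'.maxAtom + 1
      AGF.aall z (AGF.aimp
        (AGF.aAG (AGF.aiff (AGF.atom z) (ψ'.aor (φ'.aand (AGF.aEX (AGF.atom z))))))
        (AGF.atom z))
  | .qAU φ ψ =>
      let φ' := FPC φ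
      let ψ' := FPC ψ
      let z := max φ'.maxAtom ψ'.maxAtom + 1
      AGF.aall z (AGF.aimp
        (AGF.aAG (AGF.aiff (AGF.atom z) (ψ'.aor (φ'.aand (AGF.aAX (AGF.atom z))))))
        (AGF.atom z))
  | .qexi p φ => AGF.aexi p (FPC φ)

/-- The translation of the `EX`/`AG` fragment into QBF: the basic rules together with
the rule `(AG φ)^{x,P} = ⋀_{(x,y)∈E*} φ̂^{y,P}`. -/
noncomputable def hatAG {V : Type} [Fintype V] (K : Kripke ℕ V) :
    AGF ℕ → V → Set ℕ → QBF (ℕ × V)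
  | .atom p, x, P =>
      if p ∈ P then QBF.var (p, x)
      else if p ∈ K.label x then QBF.tru else QBF.fls
  | .aneg φ, x, P => QBF.bneg (hatAG K φ x P)
  | .aor φ ψ, x, P => QBF.bor (hatAG K φ x P) (hatAG K ψ x P)
  | .aEX φ, x, P => QBF.bigOr (K.succList x) (fun y => hatAG K φ y P)
  | .aAG φ, x, P => QBF.bigAnd (K.reachList x) (fun y => hatAG K φ y P)
  | .aexi p φ, x, P =>
      (Finset.univ.toList (α := V)).foldr (fun v acc => QBF.bexi (p, v) acc)
        (hatAG K φ x (insert p P))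
/-- The number of edges of a (finite) Kripke structure. -/
noncomputable def edgeCard {AP V : Type} [Fintype V] (K : Kripke AP V) : ℕ :=
  (Finset.univ.filter fun e : V × V => K.E e.1 e.2).card

/-- Flat formulas: `Q.( Φ₀ ∧ ⋀ᵢ AG(κᵢ ↔ θᵢ) )` with `Q` a sequence of propositional
quantifications, `Φ₀` a Boolean combination of basic CTL formulas and every `θᵢ` a
basic CTL formula. -/
def IsFlat (Ψ : QCTL ℕ) : Prop :=
  ∃ (Q : List (Bool × ℕ)) (m : ℕ) (κ : Fin m → ℕ)
    (Φ0 : QCTL ℕ) (θ : Fin m → QCTL ℕ),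
    BoolCombBasic Φ0 ∧ (∀ i, BasicCTL (θ i)) ∧
    Ψ = prefixQ Q (flatBody m κ Φ0 θ)


/-!
A QBF valuation `v` of the variables `p^y` (`p ∈ P`) is the same thing as an environment sending
each `p ∈ P` to the set `{y | v (p, y)}`; under this reading `ξ̂^{x,P}` holds iff `ξ` holds at `x`,
for every formula built from atoms, Boolean connectives, `EX`, `AG` and propositional
quantifiers. `FPC` preserves the semantics because `E a U b` (resp. `A a U b`) is the least set `Z`
with `Z = b ∨ (a ∧ EX Z)` (resp. `AX Z`), and it is enough to impose this equation on the states
reachable from `x`, which is what `AG` does; the fresh `z` does not occur in `a` and `b`.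

For the size one bounds, simultaneously, the size of `ξ̂^{x,P}` at one state and its sum over all
states: `EX` then costs `|E|` in the sum, and `AG` costs the sum of its body. After `FPC`, a flat
formula nests `AG` only twice, which gives `O(|V|·(|V|+|E|))` per symbol.
-/

section Until

def ExistsUntil (E : V → V → Prop) (a b : V → Prop) (x : V) : Prop :=
  ∃ ρ : ℕ → V, ρ 0 = x ∧ (∀ i, E (ρ i) (ρ (i + 1))) ∧ ∃ i, b (ρ i) ∧ ∀ j < i, a (ρ j)

def AllUntil (E : V → V → Prop) (a b : V → Prop) (x : V) : Prop :=
  ∀ ρ : ℕ → V, ρ 0 = x → (∀ i, E (ρ i) (ρ (i + 1))) → ∃ i, b (ρ i) ∧ ∀ j < i, a (ρ j)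

def prependPath (x : V) (ρ : ℕ → V) : ℕ → V
  | 0 => x
  | n + 1 => ρ n

variable {E : V → V → Prop} {a b : V → Prop} {x : V}

theorem prependPath_isPath {ρ : ℕ → V} (hx : E x (ρ 0)) (hρ : ∀ i, E (ρ i) (ρ (i + 1))) :
    ∀ i, E (prependPath x ρ i) (prependPath x ρ (i + 1))
  | 0 => hx
  | i + 1 => hρ i

theorem exists_path_from (hser : ∀ v, ∃ w, E v w) (x : V) :
    ∃ ρ : ℕ → V, ρ 0 = x ∧ ∀ i, E (ρ i) (ρ (i + 1)) := by
  choose f hf using hser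
  exact ⟨fun n => f^[n] x, rfl, fun i => by simpa only [Function.iterate_succ_apply'] using hf _⟩

theorem reflTransGen_of_path {ρ : ℕ → V} (hρ : ∀ i, E (ρ i) (ρ (i + 1))) (k : ℕ) :
    Relation.ReflTransGen E (ρ 0) (ρ k) := by
  induction k with
  | zero => exact .refl
  | succ k ih => exact ih.tail (hρ k)

theorem existsUntil_iff (hser : ∀ v, ∃ w, E v w) :
    ExistsUntil E a b x ↔ b x ∨ a x ∧ ∃ u, E x u ∧ ExistsUntil E a b u := by
  constructor
  · rintro ⟨ρ, rfl, hρ, _ | i, hb, ha⟩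
    · exact .inl hb
    · exact .inr ⟨ha 0 i.succ_pos, ρ 1, hρ 0, fun n => ρ (n + 1), rfl, fun n => hρ (n + 1),
        i, hb, fun j hj => ha (j + 1) (by omega)⟩
  · rintro (hb | ⟨hax, u, hxu, ρ, rfl, hρ, i, hb, ha⟩)
    · obtain ⟨ρ, rfl, hρ⟩ := exists_path_from hser x
      exact ⟨ρ, rfl, hρ, 0, hb, fun j hj => absurd hj j.not_lt_zero⟩
    · refine ⟨prependPath x ρ, rfl, prependPath_isPath hxu hρ, i + 1, hb, ?_⟩
      rintro (_ | j) hj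
      exacts [hax, ha j (by omega)]

theorem allUntil_iff (hser : ∀ v, ∃ w, E v w) :
    AllUntil E a b x ↔ b x ∨ a x ∧ ∀ u, E x u → AllUntil E a b u := by
  constructor
  · intro h
    refine or_iff_not_imp_left.2 fun hbx => ⟨?_, fun u hxu σ hσ0 hσ => ?_⟩
    · obtain ⟨ρ, rfl, hρ⟩ := exists_path_from hser x
      obtain ⟨_ | i, hb, ha⟩ := h ρ rfl hρ
      exacts [absurd hb hbx, ha 0 i.succ_pos]
    · subst hσ0
      obtain ⟨_ | i, hb, ha⟩ := h (prependPath x σ) rfl (prependPath_isPath hxu hσ)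
      exacts [absurd hb hbx, ⟨i, hb, fun j hj => ha (j + 1) (by omega)⟩]
  · rintro (hbx | ⟨hax, hsucc⟩) ρ rfl hρ
    · exact ⟨0, hbx, fun j hj => absurd hj j.not_lt_zero⟩
    · obtain ⟨i, hb, ha⟩ := hsucc (ρ 1) (hρ 0) (fun n => ρ (n + 1)) rfl fun n => hρ (n + 1)
      refine ⟨i + 1, hb, ?_⟩
      rintro (_ | j) hj
      exacts [hax, ha j (by omega)]

theorem forall_fixpoint_iff_existsUntil (hser : ∀ v, ∃ w, E v w) :
    (∀ S : Set V, (∀ y, Relation.ReflTransGen E x y →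
        (y ∈ S ↔ b y ∨ a y ∧ ∃ u, E y u ∧ u ∈ S)) → x ∈ S) ↔ ExistsUntil E a b x := by
  constructor
  · exact fun h => h {y | ExistsUntil E a b y} fun y _ => existsUntil_iff hser
  · rintro ⟨ρ, rfl, hρ, i, hb, ha⟩ S hS
    have hfix := fun k => hS (ρ k) (reflTransGen_of_path hρ k)
    have key : ∀ k ≤ i, ρ (i - k) ∈ S := by
      intro k
      induction k with
      | zero => exact fun _ => (hfix i).2 (.inl hb)
      | succ k ih =>
        intro hk
        have hsucc : i - (k + 1) + 1 = i - k := by omega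
        refine (hfix _).2 (.inr ⟨ha _ (by omega), ρ (i - k), hsucc ▸ hρ _, ih (by omega)⟩)
    simpa using key i le_rfl

theorem forall_fixpoint_iff_allUntil (hser : ∀ v, ∃ w, E v w) :
    (∀ S : Set V, (∀ y, Relation.ReflTransGen E x y →
        (y ∈ S ↔ b y ∨ a y ∧ ∀ u, E y u → u ∈ S)) → x ∈ S) ↔ AllUntil E a b x := by
  constructor
  · exact fun h => h {y | AllUntil E a b y} fun y _ => allUntil_iff hser
  · intro h S hS
    by_contra hxS
    -- follow successors outside `S` whenever there is one: `b` fails on such a path until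
    -- it passes a state where `a` fails
    have hchoice : ∀ y, ∃ u, E y u ∧ ((∃ u', E y u' ∧ u' ∉ S) → u ∉ S) := by
      intro y
      by_cases hy : ∃ u', E y u' ∧ u' ∉ S
      · obtain ⟨u, hu, huS⟩ := hy
        exact ⟨u, hu, fun _ => huS⟩
      · obtain ⟨u, hu⟩ := hser y
        exact ⟨u, hu, fun h => absurd h hy⟩
    choose g hgE hgS using hchoice
    set ρ : ℕ → V := fun n => g^[n] x with hρdef
    have hρ : ∀ i, E (ρ i) (ρ (i + 1)) := fun i => by
      simpa only [hρdef, Function.iterate_succ_apply'] using hgE _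
    have hfix := fun k => hS (ρ k) (reflTransGen_of_path hρ k)
    have hout : ∀ i, (∀ j < i, a (ρ j)) → ρ i ∉ S := by
      intro i
      induction i with
      | zero => exact fun _ => hxS
      | succ i ih =>
        intro ha
        have hexit : ∃ u, E (ρ i) u ∧ u ∉ S := by
          by_contra! hall
          exact ih (fun j hj => ha j (by omega)) ((hfix i).2 (.inr ⟨ha i (by omega), hall⟩))
        simpa only [hρdef, Function.iterate_succ_apply'] using hgS _ hexit
    obtain ⟨i, hb, ha⟩ := h ρ rfl hρ
    exact hout i ha ((hfix i).2 (.inl hb))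

end Until

namespace QBF

variable {W γ : Type}

theorem bsat_bigOr (l : List γ) (f : γ → QBF W) (v : W → Prop) :
    (bigOr l f).bsat v ↔ ∃ y ∈ l, (f y).bsat v := by
  induction l with
  | nil => simp [bigOr, bsat]
  | cons a l ih =>
    show (f a).bsat v ∨ (bigOr l f).bsat v ↔ _
    simp [ih]

theorem bsat_bigAnd (l : List γ) (f : γ → QBF W) (v : W → Prop) :
    (bigAnd l f).bsat v ↔ ∀ y ∈ l, (f y).bsat v := by
  induction l with
  | nil => simp [bigAnd, bsat]
  | cons a l ih =>
    show (f a).bsat v ∧ (bigAnd l f).bsat v ↔ _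
    simp [ih]

theorem bsat_foldr_bexi (ws : List W) (T : QBF W) (v : W → Prop) :
    (ws.foldr bexi T).bsat v ↔ ∃ f : W → Prop, T.bsat fun w => if w ∈ ws then f w else v w := by
  induction ws generalizing v with
  | nil =>
    simp only [List.foldr_nil, List.not_mem_nil, if_false]
    exact ⟨fun h => ⟨v, h⟩, fun ⟨_, h⟩ => h⟩
  | cons a ws ih =>
    simp only [List.foldr_cons, bsat, ih]
    constructor
    · rintro ⟨c, f, hf⟩
      refine ⟨fun w => if w ∈ ws then f w else c, ?_⟩
      convert hf using 2 with w
      by_cases h1 : w ∈ ws <;> by_cases h2 : w = a <;> simp [h1, h2]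
    · rintro ⟨f, hf⟩
      refine ⟨f a, f, ?_⟩
      convert hf using 2 with w
      by_cases h1 : w ∈ ws <;> by_cases h2 : w = a <;> simp [h1, h2]

end QBF

-- Naming the update fixes its (classical) decidability instance, so that lemmas about it
-- stated at `AP = ℕ` still match it.
noncomputable def updateEnv (ε : AP → Option (Set V)) (p : AP) (S : Set V) : AP → Option (Set V) :=
  fun q => if q = p then some S else ε q

@[simp] theorem updateEnv_self (ε : AP → Option (Set V)) (p : AP) (S : Set V) :
    updateEnv ε p S p = some S :=
  if_pos rfl

def AGF.satE (K : Kripke AP V) : AGF AP → (AP → Option (Set V)) → V → Prop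
  | .atom p, ε, x => match ε p with
      | some S => x ∈ S
      | none => p ∈ K.label x
  | .aneg φ, ε, x => ¬ AGF.satE K φ ε x
  | .aor φ ψ, ε, x => AGF.satE K φ ε x ∨ AGF.satE K ψ ε x
  | .aEX φ, ε, x => ∃ y, K.E x y ∧ AGF.satE K φ ε y
  | .aAG φ, ε, x => ∀ y, Relation.ReflTransGen K.E x y → AGF.satE K φ ε y
  | .aexi p φ, ε, x => ∃ S : Set V, AGF.satE K φ (updateEnv ε p S) x

noncomputable def envOf (P : Set ℕ) (v : ℕ × V → Prop) : ℕ → Option (Set V) :=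
  fun p => if p ∈ P then some {y | v (p, y)} else none

section Translation

variable [Fintype V] (K : Kripke ℕ V)

theorem Kripke.mem_succList {x y : V} : y ∈ K.succList x ↔ K.E x y := by
  simp [Kripke.succList]

theorem Kripke.mem_reachList {x y : V} : y ∈ K.reachList x ↔ Relation.ReflTransGen K.E x y := by
  simp [Kripke.reachList]

theorem hatAG_aexi (p : ℕ) (φ : AGF ℕ) (x : V) (P : Set ℕ) :
    hatAG K (.aexi p φ) x P =
      ((Finset.univ.toList (α := V)).map (p, ·)).foldr QBF.bexi (hatAG K φ x (insert p P)) := by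
  rw [List.foldr_map, hatAG]

theorem bsat_hatAG_iff (ξ : AGF ℕ) (x : V) (P : Set ℕ) (v : ℕ × V → Prop) :
    (hatAG K ξ x P).bsat v ↔ ξ.satE K (envOf P v) x := by
  induction ξ generalizing x P v with
  | atom p =>
    by_cases hP : p ∈ P
    · simp [hatAG, hP, QBF.bsat, AGF.satE, envOf]
    · by_cases hl : p ∈ K.label x <;> simp [hatAG, hP, hl, QBF.bsat, AGF.satE, envOf]
  | aneg φ ih => simp only [hatAG, QBF.bsat, AGF.satE, ih]
  | aor φ ψ ih₁ ih₂ => simp only [hatAG, QBF.bsat, AGF.satE, ih₁, ih₂]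
  | aEX φ ih => simp only [hatAG, QBF.bsat_bigOr, AGF.satE, Kripke.mem_succList, ih]
  | aAG φ ih => simp only [hatAG, QBF.bsat_bigAnd, AGF.satE, Kripke.mem_reachList, ih]
  | aexi p φ ih =>
    simp only [hatAG_aexi, QBF.bsat_foldr_bexi, AGF.satE, ih]
    constructor
    · rintro ⟨f, hf⟩
      refine ⟨{y | f (p, y)}, ?_⟩
      convert hf using 2
      funext q
      rcases eq_or_ne q p with rfl | hq
      · simp [updateEnv, envOf]
      · by_cases hqP : q ∈ P <;> simp [updateEnv, envOf, hq, hq.symm, hqP]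
    · rintro ⟨S, hS⟩
      refine ⟨fun w => w.2 ∈ S, ?_⟩
      convert hS using 2
      funext q
      rcases eq_or_ne q p with rfl | hq
      · simp [updateEnv, envOf]
      · by_cases hqP : q ∈ P <;> simp [updateEnv, envOf, hq, hq.symm, hqP]

theorem valid_hatAG_iff (ξ : AGF ℕ) (x : V) :
    (hatAG K ξ x ∅).valid ↔ ξ.satE K (fun _ => none) x := by
  have henv (v : ℕ × V → Prop) : envOf (∅ : Set ℕ) v = fun _ => none := by
    funext q; simp [envOf]
  simp only [QBF.valid, bsat_hatAG_iff, henv]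
  exact ⟨fun h => h fun _ => True, fun h _ => h⟩

end Translation

namespace AGF

section Connectives

variable (K : Kripke AP V) {ε : AP → Option (Set V)} {x : V}

@[simp] theorem satE_aand (φ ψ : AGF AP) :
    (φ.aand ψ).satE K ε x ↔ φ.satE K ε x ∧ ψ.satE K ε x := by
  simp [aand, satE]

@[simp] theorem satE_aimp (φ ψ : AGF AP) :
    (φ.aimp ψ).satE K ε x ↔ (φ.satE K ε x → ψ.satE K ε x) := by
  simp [aimp, satE, imp_iff_not_or]

@[simp] theorem satE_aiff (φ ψ : AGF AP) :
    (φ.aiff ψ).satE K ε x ↔ (φ.satE K ε x ↔ ψ.satE K ε x) := by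
  simp only [aiff, satE_aand, satE_aimp, iff_def]

@[simp] theorem satE_aAX (φ : AGF AP) :
    φ.aAX.satE K ε x ↔ ∀ y, K.E x y → φ.satE K ε y := by
  simp [aAX, satE]

@[simp] theorem satE_aall (p : AP) (φ : AGF AP) :
    (aall p φ).satE K ε x ↔ ∀ S : Set V, φ.satE K (updateEnv ε p S) x := by
  simp [aall, satE]

end Connectives

variable (K : Kripke ℕ V) {x : V}

theorem satE_congr {ε ε' : ℕ → Option (Set V)} (ξ : AGF ℕ) (h : ∀ q ≤ ξ.maxAtom, ε q = ε' q) :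
    ξ.satE K ε x ↔ ξ.satE K ε' x := by
  induction ξ generalizing ε ε' x with
  | atom p => simp only [satE, h p le_rfl]
  | aneg φ ih => simp only [satE, ih h]
  | aor φ ψ ih₁ ih₂ =>
    simp only [maxAtom, le_max_iff] at h
    simp only [satE, ih₁ fun q hq => h q (.inl hq), ih₂ fun q hq => h q (.inr hq)]
  | aEX φ ih => simp only [satE, ih h]
  | aAG φ ih => simp only [satE, ih h]
  | aexi p φ ih =>
    simp only [maxAtom, le_max_iff] at h
    refine exists_congr fun S => ih fun q hq => ?_
    unfold updateEnv
    split_ifs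
    exacts [rfl, h q (.inr hq)]

theorem satE_update_of_maxAtom_lt {ξ : AGF ℕ} {z : ℕ} {ε : ℕ → Option (Set V)} (S : Set V)
    (hz : ξ.maxAtom < z) :
    ξ.satE K (updateEnv ε z S) x ↔ ξ.satE K ε x :=
  satE_congr K ξ fun q hq => if_neg (by omega)

end AGF

theorem satE_FPC (K : Kripke ℕ V) (φ : QCTL ℕ) (ε : ℕ → Option (Set V)) (x : V) :
    (FPC φ).satE K ε x ↔ φ.satE K ε x := by
  induction φ generalizing ε x with
  | atom p => rfl
  | qneg φ ih => simp only [FPC, AGF.satE, QCTL.satE, ih]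
  | qor φ ψ ih₁ ih₂ => simp only [FPC, AGF.satE, QCTL.satE, ih₁, ih₂]
  | qEX φ ih => simp only [FPC, AGF.satE, QCTL.satE, ih]
  | qEU φ ψ ih₁ ih₂ =>
    have hφ : (FPC φ).maxAtom < max (FPC φ).maxAtom (FPC ψ).maxAtom + 1 := by omega
    have hψ : (FPC ψ).maxAtom < max (FPC φ).maxAtom (FPC ψ).maxAtom + 1 := by omega
    simp only [FPC, AGF.satE_aall, AGF.satE_aimp, AGF.satE, AGF.satE_aiff, AGF.satE_aand,
      AGF.satE_update_of_maxAtom_lt K _ hφ, AGF.satE_update_of_maxAtom_lt K _ hψ, updateEnv_self]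
    simp only [ih₁, ih₂]
    exact forall_fixpoint_iff_existsUntil K.serial
  | qAU φ ψ ih₁ ih₂ =>
    have hφ : (FPC φ).maxAtom < max (FPC φ).maxAtom (FPC ψ).maxAtom + 1 := by omega
    have hψ : (FPC ψ).maxAtom < max (FPC φ).maxAtom (FPC ψ).maxAtom + 1 := by omega
    simp only [FPC, AGF.satE_aall, AGF.satE_aimp, AGF.satE, AGF.satE_aiff, AGF.satE_aand,
      AGF.satE_aAX, AGF.satE_update_of_maxAtom_lt K _ hφ, AGF.satE_update_of_maxAtom_lt K _ hψ,
      updateEnv_self]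
    simp only [ih₁, ih₂]
    exact forall_fixpoint_iff_allUntil K.serial
  | qexi p φ ih => exact exists_congr fun S => ih _ x

namespace Kripke

variable (K : Kripke AP V)

theorem ext {K K' : Kripke AP V} (hE : K.E = K'.E) (hl : K.label = K'.label) : K = K' := by
  cases K; cases K'; simp_all

def withEnv (ε : AP → Option (Set V)) : Kripke AP V where
  E := K.E
  serial := K.serial
  label v := {p | match ε p with | some S => v ∈ S | none => p ∈ K.label v}

theorem withEnv_none : K.withEnv (fun _ => none) = K :=
  ext rfl (by funext v; ext q; rfl)

theorem agreeExcept_withEnv_update (ε : AP → Option (Set V)) (p : AP) (S : Set V) :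
    (K.withEnv ε).AgreeExcept (K.withEnv (updateEnv ε p S)) p :=
  ⟨rfl, fun v q hq => by simp [withEnv, updateEnv, hq]⟩

theorem withEnv_update_eq {ε : AP → Option (Set V)} {p : AP} {K' : Kripke AP V}
    (h : (K.withEnv ε).AgreeExcept K' p) :
    K.withEnv (updateEnv ε p {v | p ∈ K'.label v}) = K' := by
  refine ext h.1.symm (funext fun v => Set.ext fun q => ?_)
  rcases eq_or_ne q p with rfl | hq
  · simp [withEnv]
  · simpa [withEnv, updateEnv, hq] using (h.2 v q hq).symm

end Kripke

theorem QCTL.satE_iff_sat_withEnv (K : Kripke AP V) (φ : QCTL AP) (ε : AP → Option (Set V))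
    (x : V) : φ.satE K ε x ↔ φ.sat (K.withEnv ε) x := by
  induction φ generalizing ε x with
  | atom p => rfl
  | qneg φ ih => simp only [satE, sat, ih]
  | qor φ ψ ih₁ ih₂ => simp only [satE, sat, ih₁, ih₂]
  | qEX φ ih => simp only [satE, sat, ih]; rfl
  | qEU φ ψ ih₁ ih₂ => simp only [satE, sat, ih₁, ih₂]; rfl
  | qAU φ ψ ih₁ ih₂ => simp only [satE, sat, ih₁, ih₂]; rfl
  | qexi p φ ih =>
    simp only [satE, sat, ih]
    constructor
    · rintro ⟨S, hS⟩
      exact ⟨_, K.agreeExcept_withEnv_update ε p S, hS⟩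
    · rintro ⟨K', hK', hsat⟩
      exact ⟨{v | p ∈ K'.label v}, (K.withEnv_update_eq hK').symm ▸ hsat⟩

theorem valid_hatAG_FPC_iff_sat [Fintype V] (K : Kripke ℕ V) (φ : QCTL ℕ) (x : V) :
    (hatAG K (FPC φ) x ∅).valid ↔ φ.sat K x := by
  rw [valid_hatAG_iff, satE_FPC, QCTL.satE_iff_sat_withEnv, Kripke.withEnv_none]

namespace QBF

variable {W γ : Type}

theorem bsize_bigOr (l : List γ) (f : γ → QBF W) :
    (bigOr l f).bsize = (l.map fun y => (f y).bsize).sum + l.length + 1 := by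
  induction l with
  | nil => rfl
  | cons a l ih =>
    simp only [bigOr, List.map_cons, List.foldr_cons, bsize, List.sum_cons,
      List.length_cons] at ih ⊢
    omega

theorem bsize_bigAnd (l : List γ) (f : γ → QBF W) :
    (bigAnd l f).bsize = (l.map fun y => (f y).bsize).sum + l.length + 1 := by
  induction l with
  | nil => rfl
  | cons a l ih =>
    simp only [bigAnd, List.map_cons, List.foldr_cons, bsize, List.sum_cons,
      List.length_cons] at ih ⊢
    omega

theorem bsize_foldr_bexi (ws : List W) (T : QBF W) :
    (ws.foldr bexi T).bsize = T.bsize + ws.length := by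
  induction ws with
  | nil => rfl
  | cons a ws ih => simp only [List.foldr_cons, bsize, ih, List.length_cons]; omega

end QBF

/-- Bounds `(b, B)` on the translation `ξ̂^{x,P}` of a structure with `N` states and `M` edges:
its size is at most `b` at every state `x`, and its sizes summed over all states are at most `B`. -/
def hatSizeBound (N M : ℕ) : AGF ℕ → ℕ × ℕ
  | .atom _ => (1, N)
  | .aneg φ => ((hatSizeBound N M φ).1 + 1, (hatSizeBound N M φ).2 + N)
  | .aor φ ψ => ((hatSizeBound N M φ).1 + (hatSizeBound N M ψ).1 + 1,
      (hatSizeBound N M φ).2 + (hatSizeBound N M ψ).2 + N)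
  | .aEX φ => (N * (hatSizeBound N M φ).1 + N + 1, M * (hatSizeBound N M φ).1 + M + N)
  | .aAG φ => ((hatSizeBound N M φ).2 + N + 1, N * ((hatSizeBound N M φ).2 + N + 1))
  | .aexi _ φ => ((hatSizeBound N M φ).1 + N, (hatSizeBound N M φ).2 + N * N)

section Size

variable [Fintype V] (K : Kripke ℕ V)

theorem sum_card_succ_eq_edgeCard :
    ∑ x, (Finset.univ.filter fun y => K.E x y).card = edgeCard K := by
  simp only [edgeCard, Finset.card_filter, Fintype.sum_prod_type]

theorem bsize_hatAG_aEX (φ : AGF ℕ) (x : V) (P : Set ℕ) :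
    (hatAG K (.aEX φ) x P).bsize =
      ∑ y ∈ Finset.univ.filter (fun y => K.E x y), (hatAG K φ y P).bsize +
        (Finset.univ.filter fun y => K.E x y).card + 1 := by
  rw [hatAG, QBF.bsize_bigOr, Kripke.succList, Finset.sum_map_toList, Finset.length_toList]

theorem bsize_hatAG_aAG (φ : AGF ℕ) (x : V) (P : Set ℕ) :
    (hatAG K (.aAG φ) x P).bsize =
      ∑ y ∈ Finset.univ.filter (fun y => Relation.ReflTransGen K.E x y), (hatAG K φ y P).bsize +
        (Finset.univ.filter fun y => Relation.ReflTransGen K.E x y).card + 1 := by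
  rw [hatAG, QBF.bsize_bigAnd, Kripke.reachList, Finset.sum_map_toList, Finset.length_toList]

theorem bsize_hatAG_aexi (p : ℕ) (φ : AGF ℕ) (x : V) (P : Set ℕ) :
    (hatAG K (.aexi p φ) x P).bsize = (hatAG K φ x (insert p P)).bsize + Fintype.card V := by
  rw [hatAG_aexi, QBF.bsize_foldr_bexi, List.length_map, Finset.length_toList, Finset.card_univ]

theorem bsize_hatAG_le (ξ : AGF ℕ) :
    (∀ x P, (hatAG K ξ x P).bsize ≤ (hatSizeBound (Fintype.card V) (edgeCard K) ξ).1) ∧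
      ∀ P, ∑ x, (hatAG K ξ x P).bsize ≤ (hatSizeBound (Fintype.card V) (edgeCard K) ξ).2 := by
  set N := Fintype.card V
  set M := edgeCard K
  have hsum_le {f : V → ℕ} {c : ℕ} (h : ∀ x, f x ≤ c) : ∑ x, f x ≤ N * c := by
    simpa using Finset.sum_le_card_nsmul Finset.univ f c fun x _ => h x
  have hcard_le (s : Finset V) : s.card ≤ N := Finset.card_le_univ s
  induction ξ with
  | atom p =>
    have hpt (x : V) (P : Set ℕ) : (hatAG K (.atom p) x P).bsize = 1 := by
      unfold hatAG; split_ifs <;> rfl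
    exact ⟨fun x P => (hpt x P).le, fun P => by simp [hpt, hatSizeBound, N]⟩
  | aneg φ ih =>
    refine ⟨fun x P => Nat.succ_le_succ (ih.1 x P), fun P => ?_⟩
    simp only [hatAG, QBF.bsize, Finset.sum_add_distrib, Finset.sum_const, Finset.card_univ,
      smul_eq_mul, mul_one, hatSizeBound]
    exact Nat.add_le_add_right (ih.2 P) _
  | aor φ ψ ih₁ ih₂ =>
    refine ⟨fun x P => Nat.succ_le_succ (Nat.add_le_add (ih₁.1 x P) (ih₂.1 x P)), fun P => ?_⟩
    simp only [hatAG, QBF.bsize, Finset.sum_add_distrib, Finset.sum_const, Finset.card_univ,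
      smul_eq_mul, mul_one, hatSizeBound]
    exact Nat.add_le_add_right (Nat.add_le_add (ih₁.2 P) (ih₂.2 P)) _
  | aEX φ ih =>
    set b := (hatSizeBound N M φ).1
    have hpt (x : V) (P : Set ℕ) : (hatAG K (.aEX φ) x P).bsize ≤
        (Finset.univ.filter fun y => K.E x y).card * b +
          (Finset.univ.filter fun y => K.E x y).card + 1 := by
      rw [bsize_hatAG_aEX]
      gcongr
      simpa using Finset.sum_le_card_nsmul _ _ b fun y _ => ih.1 y P
    refine ⟨fun x P => (hpt x P).trans ?_, fun P => (Finset.sum_le_sum fun x _ => hpt x P).trans ?_⟩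
    · have := hcard_le (Finset.univ.filter fun y => K.E x y)
      simp only [hatSizeBound]
      nlinarith
    · simp only [Finset.sum_add_distrib, ← Finset.sum_mul, sum_card_succ_eq_edgeCard,
        Finset.sum_const, Finset.card_univ, smul_eq_mul, mul_one, hatSizeBound]
      rw [mul_comm]
  | aAG φ ih =>
    have hpt (x : V) (P : Set ℕ) :
        (hatAG K (.aAG φ) x P).bsize ≤ (hatSizeBound N M φ).2 + N + 1 := by
      rw [bsize_hatAG_aAG]
      gcongr
      · exact (Finset.sum_le_sum_of_subset (Finset.subset_univ _)).trans (ih.2 P)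
      · exact hcard_le _
    exact ⟨hpt, fun P => hsum_le fun x => hpt x P⟩
  | aexi p φ ih =>
    refine ⟨fun x P => ?_, fun P => ?_⟩
    · rw [bsize_hatAG_aexi]
      exact Nat.add_le_add_right (ih.1 x _) _
    · simp only [bsize_hatAG_aexi, Finset.sum_add_distrib, Finset.sum_const, Finset.card_univ,
        smul_eq_mul, hatSizeBound]
      exact Nat.add_le_add_right (ih.2 _) _

end Size

section FlatSize

variable {N M : ℕ}

theorem QCTL.qsize_pos (φ : QCTL AP) : 0 < φ.qsize := by
  cases φ <;> simp [QCTL.qsize]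

theorem hatSizeBound_FPC_of_boolAtoms {α : QCTL ℕ} (h : BoolAtoms α) :
    (hatSizeBound N M (FPC α)).1 ≤ α.qsize ∧ (hatSizeBound N M (FPC α)).2 ≤ N * α.qsize := by
  induction h with
  | atom p => simp [FPC, hatSizeBound, QCTL.qsize]
  | qneg _ ih =>
    simp only [FPC, hatSizeBound, QCTL.qsize]
    constructor <;> linarith [ih.1, ih.2]
  | qor _ _ ih₁ ih₂ =>
    simp only [FPC, hatSizeBound, QCTL.qsize]
    constructor <;> linarith [ih₁.1, ih₁.2, ih₂.1, ih₂.2]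

theorem hatSizeBound_FPC_of_basicCTL {θ : QCTL ℕ} (h : BasicCTL θ) (hN : 1 ≤ N) :
    (hatSizeBound N M (FPC θ)).1 ≤ 40 * ((N + M) * θ.qsize) ∧
      (hatSizeBound N M (FPC θ)).2 ≤ 40 * (N * ((N + M) * θ.qsize)) := by
  cases h with
  | @qEX α hα =>
    obtain ⟨h₁, h₂⟩ := hatSizeBound_FPC_of_boolAtoms (N := N) (M := M) hα
    have := QCTL.qsize_pos α
    have := Nat.mul_le_mul_left M h₁
    have := Nat.le_mul_of_pos_left (M * α.qsize) hN
    have := Nat.le_mul_of_pos_left M hN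
    simp only [FPC, hatSizeBound, QCTL.qsize]
    constructor <;> nlinarith
  | @qEU α β hα hβ =>
    obtain ⟨-, hα₂⟩ := hatSizeBound_FPC_of_boolAtoms (N := N) (M := M) hα
    obtain ⟨-, hβ₂⟩ := hatSizeBound_FPC_of_boolAtoms (N := N) (M := M) hβ
    have := QCTL.qsize_pos α
    have := QCTL.qsize_pos β
    simp only [FPC, AGF.aall, AGF.aimp, AGF.aiff, AGF.aand, hatSizeBound, QCTL.qsize]
    constructor <;> nlinarith
  | @qAU α β hα hβ =>
    obtain ⟨-, hα₂⟩ := hatSizeBound_FPC_of_boolAtoms (N := N) (M := M) hα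
    obtain ⟨-, hβ₂⟩ := hatSizeBound_FPC_of_boolAtoms (N := N) (M := M) hβ
    have := QCTL.qsize_pos α
    have := QCTL.qsize_pos β
    simp only [FPC, AGF.aall, AGF.aimp, AGF.aiff, AGF.aand, AGF.aAX, hatSizeBound, QCTL.qsize]
    constructor <;> nlinarith

variable (N M) in
def FPCSizeLe (c : ℕ) (φ : QCTL ℕ) : Prop :=
  (hatSizeBound N M (FPC φ)).1 ≤ c * φ.qsize

namespace FPCSizeLe

variable {c : ℕ} {φ ψ : QCTL ℕ}

theorem qneg (hc : 1 ≤ c) (h : FPCSizeLe N M c φ) : FPCSizeLe N M c (.qneg φ) := by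
  unfold FPCSizeLe at *
  simp only [FPC, hatSizeBound, QCTL.qsize]
  nlinarith

theorem qor (hc : 1 ≤ c) (hφ : FPCSizeLe N M c φ) (hψ : FPCSizeLe N M c ψ) :
    FPCSizeLe N M c (.qor φ ψ) := by
  unfold FPCSizeLe at *
  simp only [FPC, hatSizeBound, QCTL.qsize]
  nlinarith

theorem qexi (hc : N ≤ c) (p : ℕ) (h : FPCSizeLe N M c φ) : FPCSizeLe N M c (.qexi p φ) := by
  unfold FPCSizeLe at *
  simp only [FPC, hatSizeBound, QCTL.qsize]
  nlinarith

theorem qand (hc : 1 ≤ c) (hφ : FPCSizeLe N M c φ) (hψ : FPCSizeLe N M c ψ) :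
    FPCSizeLe N M c (φ.qand ψ) :=
  qneg hc (qor hc (qneg hc hφ) (qneg hc hψ))

theorem conjList (hc : 1 ≤ c) {L : List (QCTL ℕ)} (hL : ∀ φ ∈ L, FPCSizeLe N M c φ)
    (hψ : FPCSizeLe N M c ψ) : FPCSizeLe N M c (_root_.conjList L ψ) := by
  induction L with
  | nil => exact hψ
  | cons φ L ih =>
    exact qand hc (hL φ List.mem_cons_self) (ih fun φ' h => hL φ' (List.mem_cons_of_mem _ h))

theorem prefixQ (hN : 1 ≤ N) (hc : N ≤ c) (Q : List (Bool × ℕ)) (h : FPCSizeLe N M c φ) :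
    FPCSizeLe N M c (_root_.prefixQ Q φ) := by
  induction Q with
  | nil => exact h
  | cons bp Q ih =>
    have hc₁ : 1 ≤ c := hN.trans hc
    obtain ⟨_ | _, p⟩ := bp
    · exact qneg hc₁ (qexi hc p (qneg hc₁ ih))
    · exact qexi hc p ih

theorem of_boolCombBasic (hN : 1 ≤ N) (hc : 40 * (N + M) ≤ c) (h : BoolCombBasic φ) :
    FPCSizeLe N M c φ := by
  have hc₁ : 1 ≤ c := by omega
  induction h with
  | basic hθ =>
    have := (hatSizeBound_FPC_of_basicCTL (M := M) hθ hN).1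
    unfold FPCSizeLe
    nlinarith
  | atom p => simpa [FPCSizeLe, FPC, hatSizeBound, QCTL.qsize] using hc₁
  | qneg _ ih => exact qneg hc₁ ih
  | qor _ _ ih₁ ih₂ => exact qor hc₁ ih₁ ih₂

theorem qAG_qiff (hN : 1 ≤ N) (hc : 250 * (N * (N + M)) ≤ c) (κ : ℕ) {θ : QCTL ℕ}
    (hθ : BasicCTL θ) : FPCSizeLe N M c (.qAG (.qiff (.atom κ) θ)) := by
  have := (hatSizeBound_FPC_of_basicCTL (M := M) hθ hN).2
  have := QCTL.qsize_pos θ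
  unfold FPCSizeLe
  simp only [QCTL.qAG, QCTL.qEF, QCTL.qtop, QCTL.qiff, QCTL.qand, QCTL.qimp, FPC,
    AGF.aall, AGF.aimp, AGF.aiff, AGF.aand, hatSizeBound, QCTL.qsize]
  nlinarith

theorem of_isFlat (hN : 1 ≤ N) {Ψ : QCTL ℕ} (hΨ : IsFlat Ψ) :
    FPCSizeLe N M (250 * (N * (N + M))) Ψ := by
  obtain ⟨Q, m, κ, Φ0, θ, hΦ0, hθ, rfl⟩ := hΨ
  have hNc : N ≤ 250 * (N * (N + M)) := by nlinarith
  refine prefixQ hN hNc Q (conjList (by omega) ?_ (of_boolCombBasic hN (by nlinarith) hΦ0))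
  simp only [List.mem_map, List.mem_finRange, true_and]
  rintro _ ⟨i, rfl⟩
  exact qAG_qiff hN le_rfl (κ i) (hθ i)

end FPCSizeLe

end FlatSize

/-- Correctness and size of the flat fixed-point reduction (method FPF): for any flat
formula `Ψ` equivalent to `Φ` (of size linear in `|Φ|`, with linearity constant `C1`),
the QBF formula `FPC(Ψ)^{x,∅}` is valid iff `K,x ⊨ Φ`, and its size is in
`O(|V|·(|V|+|E|)·|Φ|)`. -/
theorem fpf_correct (C1 : ℕ) :
    ∃ C2 : ℕ,
      ∀ (V : Type) [Fintype V] (K : Kripke ℕ V) (x : V) (Φ Ψ : QCTL ℕ),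
        IsFlat Ψ → QEquiv Φ Ψ → Ψ.qsize ≤ C1 * Φ.qsize →
        (((hatAG K (FPC Ψ) x ∅).valid ↔ Φ.sat K x) ∧
          (hatAG K (FPC Ψ) x ∅).bsize ≤
            C2 * (Fintype.card V * ((Fintype.card V + edgeCard K) * Φ.qsize))) := by
  refine ⟨250 * C1, fun V _ K x Φ Ψ hflat hequiv hsize => ⟨?_, ?_⟩⟩
  · exact (valid_hatAG_FPC_iff_sat K Ψ x).trans (hequiv V K x).symm
  · set N := Fintype.card V
    set M := edgeCard K
    have hN : 1 ≤ N := Fintype.card_pos_iff.mpr ⟨x⟩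
    calc (hatAG K (FPC Ψ) x ∅).bsize
        ≤ (hatSizeBound N M (FPC Ψ)).1 := (bsize_hatAG_le K (FPC Ψ)).1 x ∅
      _ ≤ 250 * (N * (N + M)) * Ψ.qsize := FPCSizeLe.of_isFlat hN hflat
      _ ≤ 250 * (N * (N + M)) * (C1 * Φ.qsize) := Nat.mul_le_mul_left _ hsize
      _ = 250 * C1 * (N * ((N + M) * Φ.qsize)) := by ring
end

section
/- Correctness of the unique-reachable-state formula: let φ be a QCTL formula and p an atomic proposition not occurring in φ; then for every Kripke structure K and state x, K,x ⊨ EF φ ∧ ∀p.( EF(p ∧ φ) → AG(φ → p) ) if and only if there is exactly one state reachable from x (along E*, including x itself) satisfying φ. -/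
open Classical

variable {AP V : Type}

section Aux

lemma sat_inv (φ : QCTL AP) : ∀ (K K' : Kripke AP V) (p : AP),
    K.AgreeExcept K' p → p ∉ φ.atoms → ∀ x, (QCTL.sat φ K x ↔ QCTL.sat φ K' x) := by
  induction φ with
  | atom q =>
    intro K K' p h hp x
    have hq : q ≠ p := by
      intro e; exact hp (by simp [QCTL.atoms, e])
    exact (h.2 x q hq).symm
  | qneg φ ih =>
    intro K K' p h hp x
    simp only [QCTL.sat]
    exact not_congr (ih K K' p h (by simpa [QCTL.atoms] using hp) x)
  | qor φ ψ ihφ ihψ =>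
    intro K K' p h hp x
    simp only [QCTL.atoms, Set.mem_union, not_or] at hp
    simp only [QCTL.sat]
    exact or_congr (ihφ K K' p h hp.1 x) (ihψ K K' p h hp.2 x)
  | qEX φ ih =>
    intro K K' p h hp x
    simp only [QCTL.sat, h.1]
    exact exists_congr fun y => and_congr_right fun _ =>
      ih K K' p h (by simpa [QCTL.atoms] using hp) y
  | qEU φ ψ ihφ ihψ =>
    intro K K' p h hp x
    simp only [QCTL.atoms, Set.mem_union, not_or] at hp
    simp only [QCTL.sat, h.1]
    refine exists_congr fun ρ => and_congr_right fun _ => and_congr_right fun _ =>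
      exists_congr fun i => and_congr (ihψ K K' p h hp.2 _) ?_
    exact forall_congr' fun j => imp_congr Iff.rfl (ihφ K K' p h hp.1 _)
  | qAU φ ψ ihφ ihψ =>
    intro K K' p h hp x
    simp only [QCTL.atoms, Set.mem_union, not_or] at hp
    simp only [QCTL.sat, h.1]
    refine forall_congr' fun ρ => imp_congr Iff.rfl (imp_congr Iff.rfl
      (exists_congr fun i => and_congr (ihψ K K' p h hp.2 _) ?_))
    exact forall_congr' fun j => imp_congr Iff.rfl (ihφ K K' p h hp.1 _)
  | qexi q φ ih =>
    intro K K' p h hp x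
    simp only [QCTL.atoms, Set.mem_insert_iff, not_or] at hp
    obtain ⟨hpq, hpφ⟩ := hp
    simp only [QCTL.sat]
    constructor
    · rintro ⟨K2, h2, hsat⟩
      refine ⟨⟨K2.E, K2.serial, fun v => {r | if r = q then r ∈ K2.label v else r ∈ K'.label v}⟩,
        ⟨by rw [h2.1, h.1], ?_⟩, ?_⟩
      · intro v r hr
        simp only [Set.mem_setOf_eq, if_neg hr]
      · refine (ih K2 _ p ⟨h2.1.symm ▸ rfl, ?_⟩ hpφ x).mp hsat
        intro v r hr
        simp only [Set.mem_setOf_eq]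
        by_cases hrq : r = q
        · simp [hrq]
        · rw [if_neg hrq, h.2 v r hr, ← h2.2 v r hrq]
    · rintro ⟨K2, h2, hsat⟩
      refine ⟨⟨K2.E, K2.serial, fun v => {r | if r = q then r ∈ K2.label v else r ∈ K.label v}⟩,
        ⟨by rw [h2.1, h.1], ?_⟩, ?_⟩
      · intro v r hr
        simp only [Set.mem_setOf_eq, if_neg hr]
      · refine (ih K2 _ p ⟨h2.1.symm ▸ rfl, ?_⟩ hpφ x).mp hsat
        intro v r hr
        simp only [Set.mem_setOf_eq]
        by_cases hrq : r = q
        · simp [hrq]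
        · rw [if_neg hrq, ← h.2 v r hr, ← h2.2 v r hrq]

lemma qtop_sat [Inhabited AP] (K : Kripke AP V) (x : V) : (QCTL.qtop : QCTL AP).sat K x := by
  simp only [QCTL.qtop, QCTL.sat]
  exact Classical.em _

noncomputable def extendPath (K : Kripke AP V) (v : V) : ℕ → V :=
  fun n => Nat.rec v (fun _ w => Classical.choose (K.serial w)) n

lemma extendPath_edge (K : Kripke AP V) (v : V) (i : ℕ) :
    K.E (extendPath K v i) (extendPath K v (i + 1)) :=
  Classical.choose_spec (K.serial _)

lemma path_reach (K : Kripke AP V) (ρ : ℕ → V) (hE : ∀ i, K.E (ρ i) (ρ (i + 1))) :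
    ∀ i, Relation.ReflTransGen K.E (ρ 0) (ρ i) := by
  intro i
  induction i with
  | zero => exact Relation.ReflTransGen.refl
  | succ n ihn => exact ihn.tail (hE n)

lemma qEF_sat [Inhabited AP] (K : Kripke AP V) (φ : QCTL AP) (x : V) :
    (QCTL.qEF φ).sat K x ↔ ∃ y, Relation.ReflTransGen K.E x y ∧ φ.sat K y := by
  constructor
  · rintro ⟨ρ, h0, hE, i, hi, -⟩
    exact ⟨ρ i, h0 ▸ path_reach K ρ hE i, hi⟩
  · rintro ⟨y, hxy, hy⟩
    induction hxy using Relation.ReflTransGen.head_induction_on with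
    | refl =>
      exact ⟨extendPath K y, rfl, extendPath_edge K y, 0, hy, by omega⟩
    | @head a c hac hcb ih =>
      obtain ⟨ρ, h0, hE, i, hi, -⟩ := ih
      refine ⟨fun n => Nat.casesOn n a ρ, rfl, ?_, i + 1, hi, fun j _ => qtop_sat K _⟩
      intro n
      cases n with
      | zero => simpa [h0] using hac
      | succ m => exact hE m

lemma qand_sat (K : Kripke AP V) (φ ψ : QCTL AP) (x : V) :
    (QCTL.qand φ ψ).sat K x ↔ φ.sat K x ∧ ψ.sat K x := by
  simp only [QCTL.qand, QCTL.sat]; tauto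

lemma qimp_sat (K : Kripke AP V) (φ ψ : QCTL AP) (x : V) :
    (QCTL.qimp φ ψ).sat K x ↔ (φ.sat K x → ψ.sat K x) := by
  simp only [QCTL.qimp, QCTL.sat]; tauto

lemma qall_sat (K : Kripke AP V) (p : AP) (φ : QCTL AP) (x : V) :
    (QCTL.qall p φ).sat K x ↔ ∀ K' : Kripke AP V, K.AgreeExcept K' p → φ.sat K' x := by
  simp only [QCTL.qall, QCTL.sat]
  push_neg
  rfl

lemma qAG_sat [Inhabited AP] (K : Kripke AP V) (φ : QCTL AP) (x : V) :
    (QCTL.qAG φ).sat K x ↔ ∀ y, Relation.ReflTransGen K.E x y → φ.sat K y := by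
  have h0 : (QCTL.qAG φ).sat K x ↔ ¬ (QCTL.qEF (QCTL.qneg φ)).sat K x := Iff.rfl
  rw [h0, qEF_sat]
  constructor
  · intro h y hy
    by_contra hc
    exact h ⟨y, hy, hc⟩
  · rintro h ⟨y, hy, hc⟩
    exact hc (h y hy)

end Aux

/-- Correctness of the unique-reachable-state formula
`E_{=1}F(φ) := EF φ ∧ ∀p.( EF(p∧φ) → AG(φ→p) )` (for `p` not occurring in `φ`):
it holds at `x` iff exactly one state reachable from `x` satisfies `φ`. -/
theorem uniqueF_correct {AP V : Type} [Inhabited AP] [Fintype V]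
    (K : Kripke AP V) (x : V) (φ : QCTL AP) (p : AP) (hp : p ∉ φ.atoms) :
    (QCTL.qand (QCTL.qEF φ)
      (QCTL.qall p
        (QCTL.qimp (QCTL.qEF (QCTL.qand (QCTL.atom p) φ))
          (QCTL.qAG (QCTL.qimp φ (QCTL.atom p)))))).sat K x ↔
      (∃! y : V, Relation.ReflTransGen K.E x y ∧ φ.sat K y) := by
  rw [qand_sat, qall_sat, qEF_sat]
  constructor
  · rintro ⟨⟨y0, hr0, hy0⟩, hall⟩
    refine ⟨y0, ⟨hr0, hy0⟩, ?_⟩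
    rintro y ⟨hry, hy⟩
    -- build the structure labelling only y0 with p
    set K1 : Kripke AP V :=
      ⟨K.E, K.serial, fun v => {r | if r = p then v = y0 else r ∈ K.label v}⟩ with hK1
    have hagree : K.AgreeExcept K1 p := by
      refine ⟨rfl, fun v r hr => ?_⟩
      simp [hK1, if_neg hr]
    have hinv := sat_inv φ K K1 p hagree hp
    have h1 := (qimp_sat K1 _ _ x).mp (hall K1 hagree)
    have hpre : (QCTL.qEF (QCTL.qand (QCTL.atom p) φ)).sat K1 x := by
      rw [qEF_sat]
      refine ⟨y0, hr0, (qand_sat K1 _ _ y0).mpr ⟨?_, (hinv y0).mp hy0⟩⟩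
      simp [QCTL.sat, hK1]
    have hAG := (qAG_sat K1 _ x).mp (h1 hpre) y hry
    have := (qimp_sat K1 _ _ y).mp hAG ((hinv y).mp hy)
    simpa [QCTL.sat, hK1] using this
  · rintro ⟨y0, ⟨hr0, hy0⟩, huniq⟩
    refine ⟨⟨y0, hr0, hy0⟩, ?_⟩
    intro K' hagree
    have hE' : K'.E = K.E := hagree.1
    have hinv := sat_inv φ K K' p hagree hp
    rw [qimp_sat, qEF_sat, qAG_sat]
    rintro ⟨z, hrz, hz⟩
    rw [qand_sat] at hz
    have hzK : φ.sat K z := (hinv z).mpr hz.2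
    have hz0 : z = y0 := huniq z ⟨hE' ▸ hrz, hzK⟩
    intro y hry
    rw [qimp_sat]
    intro hyK'
    have : y = y0 := huniq y ⟨hE' ▸ hry, (hinv y).mpr hyK'⟩
    subst this
    subst hz0
    exact hz.1
end
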